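/- arXiv:1612.04548 — 6 statements merged into one kernel-verified Lean document; each statement's English description precedes it below -/
import Mathlib

section
/- A 2×2 complex matrix H that is skew-Hermitian (i.e., its conjugate transpose equals −H) is anisotropic if and only if det H is a negative real number. -/
open Matrix

/-- A complex square matrix `H` is anisotropic if `x̄ᵀ H x ≠ 0` for every nonzero `x`. -/
def Matrix.IsAnisotropic {n : ℕ} (H : Matrix (Fin n) (Fin n) ℂ) : Prop :=
  ∀ x : Fin n → ℂ, x ≠ 0 → dotProduct (star x) (H.mulVec x) ≠ 0


private lemma quad_aux (A Dl br bi x0r x0i x1r x1i : ℝ)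
    (hAD : br^2 + bi^2 < A*Dl) (hA0 : A ≠ 0)
    (hQ0 : A*(x0r^2+x0i^2) + Dl*(x1r^2+x1i^2)
      + 2*(x0r*(br*x1i + bi*x1r) - x0i*(br*x1r - bi*x1i)) = 0) :
    x0r = 0 ∧ x0i = 0 ∧ x1r = 0 ∧ x1i = 0 := by
  have key : (A*x0r + bi*x1r + br*x1i)^2 + (A*x0i - br*x1r + bi*x1i)^2
      + (A*Dl - (br^2+bi^2))*(x1r^2+x1i^2) = 0 := by
    linear_combination A * hQ0
  have hle : x1r^2 + x1i^2 ≤ 0 := by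
    nlinarith [sq_nonneg (A*x0r + bi*x1r + br*x1i), sq_nonneg (A*x0i - br*x1r + bi*x1i)]
  have h1r : x1r = 0 := by
    have : x1r^2 = 0 := by nlinarith [sq_nonneg x1r, sq_nonneg x1i]
    exact pow_eq_zero_iff two_ne_zero |>.mp this
  have h1i : x1i = 0 := by
    have : x1i^2 = 0 := by nlinarith [sq_nonneg x1r, sq_nonneg x1i]
    exact pow_eq_zero_iff two_ne_zero |>.mp this
  rw [h1r, h1i] at key
  have k2 : (A*x0r)^2 + (A*x0i)^2 = 0 := by linear_combination key
  have h0r : x0r = 0 := by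
    have : (A*x0r)^2 = 0 := by nlinarith [sq_nonneg (A*x0r), sq_nonneg (A*x0i)]
    rcases mul_eq_zero.mp (pow_eq_zero_iff two_ne_zero |>.mp this) with h | h
    · exact absurd h hA0
    · exact h
  have h0i : x0i = 0 := by
    have : (A*x0i)^2 = 0 := by nlinarith [sq_nonneg (A*x0r), sq_nonneg (A*x0i)]
    rcases mul_eq_zero.mp (pow_eq_zero_iff two_ne_zero |>.mp this) with h | h
    · exact absurd h hA0
    · exact h
  exact ⟨h0r, h0i, h1r, h1i⟩

theorem skewHermitian_anisotropic_iff_det_neg (H : Matrix (Fin 2) (Fin 2) ℂ)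
    (hskew : Hᴴ = -H) :
    H.IsAnisotropic ↔ ∃ r : ℝ, r < 0 ∧ H.det = (r : ℂ) := by
  have h00 := congrFun (congrFun hskew 0) 0
  have h11 := congrFun (congrFun hskew 1) 1
  have h01 := congrFun (congrFun hskew 0) 1
  simp only [Matrix.conjTranspose_apply, Matrix.neg_apply] at h00 h11 h01
  have ha : (H 0 0).re = 0 := by
    have := congrArg Complex.re h00; simp at this; linarith
  have hd : (H 1 1).re = 0 := by
    have := congrArg Complex.re h11; simp at this; linarith
  have hcr : (H 1 0).re = -(H 0 1).re := by
    have := congrArg Complex.re h01; simpa using this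
  have hci : (H 1 0).im = (H 0 1).im := by
    have := congrArg Complex.im h01; simp at this; linarith
  set A := (H 0 0).im with hAdef
  set Dl := (H 1 1).im with hDdef
  set br := (H 0 1).re with hbrdef
  set bi := (H 0 1).im with hbidef
  have hdetre : H.det.re = br^2 + bi^2 - A*Dl := by
    rw [Matrix.det_fin_two]
    simp only [Complex.sub_re, Complex.mul_re, ha, hd, hcr, hci]
    ring
  have hdetim : H.det.im = 0 := by
    rw [Matrix.det_fin_two]
    simp only [Complex.sub_im, Complex.mul_im, ha, hd, hcr, hci]
    ring
  have hQ : ∀ x : Fin 2 → ℂ, (dotProduct (star x) (H.mulVec x)) = Complex.I *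
      ((A*((x 0).re^2+(x 0).im^2) + Dl*((x 1).re^2+(x 1).im^2)
        + 2*((x 0).re*(br*(x 1).im + bi*(x 1).re) - (x 0).im*(br*(x 1).re - bi*(x 1).im)) : ℝ) : ℂ) := by
    intro x
    have hF : (dotProduct (star x) (H.mulVec x)) =
        star (x 0) * (H 0 0 * x 0 + H 0 1 * x 1) + star (x 1) * (H 1 0 * x 0 + H 1 1 * x 1) := by
      simp [dotProduct, Matrix.mulVec, Fin.sum_univ_two]
    rw [hF]
    apply Complex.ext <;>
      simp only [Complex.add_re, Complex.add_im, Complex.mul_re, Complex.mul_im,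
        Complex.I_re, Complex.I_im, Complex.ofReal_re, Complex.ofReal_im,
        RCLike.star_def, Complex.conj_re, Complex.conj_im, ha, hd, hcr, hci] <;>
      ring
  constructor
  · intro hani
    refine ⟨br^2 + bi^2 - A*Dl, ?_, by
      apply Complex.ext <;>
        simp only [hdetre, hdetim, Complex.ofReal_re, Complex.ofReal_im]⟩
    by_contra hK
    push_neg at hK
    by_cases hA0 : A = 0
    · refine hani ![1, 0] (by
        intro h
        have := congrFun h 0
        simp at this) ?_
      rw [hQ]
      simp [hA0]
    · set t := Real.sqrt (br^2 + bi^2 - A*Dl) with htdef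
      have ht : t^2 = br^2 + bi^2 - A*Dl := Real.sq_sqrt hK
      refine hani ![(↑(t - bi) + ↑br * Complex.I), (A : ℂ)] (by
        intro h
        have := congrFun h 1
        simp at this
        exact hA0 this) ?_
      rw [hQ]
      refine mul_eq_zero_of_right _ ?_
      rw [Complex.ofReal_eq_zero]
      simp only [Matrix.cons_val_zero, Matrix.cons_val_one, Matrix.head_cons,
        Complex.add_re, Complex.add_im, Complex.mul_re, Complex.mul_im,
        Complex.I_re, Complex.I_im, Complex.ofReal_re, Complex.ofReal_im]
      linear_combination A * ht
  · rintro ⟨r, hr, hdet⟩ x hx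
    have hK : br^2 + bi^2 - A*Dl < 0 := by
      have : H.det.re = r := by rw [hdet]; simp
      rw [hdetre] at this; linarith
    have hbnn : (0:ℝ) ≤ br^2 + bi^2 := by positivity
    have hAD : br^2 + bi^2 < A*Dl := by linarith
    have hA0 : A ≠ 0 := by
      intro h; rw [h, zero_mul] at hAD; linarith
    rw [hQ]
    refine mul_ne_zero Complex.I_ne_zero ?_
    rw [Ne, Complex.ofReal_eq_zero]
    intro hQ0
    obtain ⟨h0r, h0i, h1r, h1i⟩ := quad_aux A Dl br bi (x 0).re (x 0).im (x 1).re (x 1).im hAD hA0 hQ0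
    apply hx
    funext i
    fin_cases i
    · exact Complex.ext h0r h0i
    · exact Complex.ext h1r h1i
end

section
/- Let d ≥ 2 be an integer and k_1, k_2, k_3 integers with 1 ≤ k_j ≤ d−1 and gcd(d, k_1, k_2, k_3) = 1. For an integer s coprime to d, set x_j = exp(2πi k_j s/d) for j = 1, 2, 3 and let h_s be the 2×2 complex matrix with entries h_s(1,1) = (1−x_1x_2)/((1−x_1)(1−x_2)), h_s(1,2) = −x_2/(1−x_2), h_s(2,1) = −1/(1−x_2), h_s(2,2) = (1−x_2x_3)/((1−x_2)(1−x_3)). Then condition (S) holds for (d, k_1, k_2, k_3) if and only if for every integer s coprime to d the matrix h_s is anisotropic. -/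
open Matrix

/-- The skew-Hermitian matrix `h_s` built from `x_j = exp(2πi k_j s / d)`. -/
noncomputable def hMat (d : ℕ) (k : Fin 3 → ℤ) (s : ℤ) : Matrix (Fin 2) (Fin 2) ℂ :=
  let x : Fin 3 → ℂ := fun j => Complex.exp (2 * Real.pi * Complex.I * ((k j * s : ℤ) : ℂ) / d)
  !![(1 - x 0 * x 1) / ((1 - x 0) * (1 - x 1)), -(x 1) / (1 - x 1);
     -1 / (1 - x 1), (1 - x 1 * x 2) / ((1 - x 1) * (1 - x 2))]

/-- Condition (S). -/
def CondS (d : ℕ) (k : Fin 3 → ℤ) : Prop :=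
  ∀ s : ℤ, Int.gcd s d = 1 →
    (∑ j, Int.fract ((k j : ℝ) * s / d) < 1 ∨
     ∑ j, Int.fract (-((k j : ℝ) * s) / d) < 1)

namespace CondSAniso

open Complex

lemma one_sub_exp (r : ℝ) :
    1 - Complex.exp (2 * Real.pi * Complex.I * r) =
      -2 * Complex.I * (Real.sin (Real.pi * r) : ℂ) * Complex.exp (Real.pi * Complex.I * r) := by
  rw [Complex.ofReal_sin, Complex.sin, Complex.ofReal_mul]
  have h1 : -2 * Complex.I * ((Complex.exp (-(↑Real.pi * ↑r) * I) - Complex.exp (↑Real.pi * ↑r * I)) * I / 2) * Complex.exp (↑Real.pi * I * ↑r)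
      = Complex.exp (-(↑Real.pi * ↑r) * I + ↑Real.pi * I * ↑r) - Complex.exp (↑Real.pi * ↑r * I + ↑Real.pi * I * ↑r) := by
    rw [Complex.exp_add, Complex.exp_add]
    ring_nf
    rw [Complex.I_sq]
    ring
  rw [h1]
  rw [show (-(↑Real.pi * (↑r:ℂ)) * I + ↑Real.pi * I * ↑r) = 0 by ring, Complex.exp_zero]
  congr 1
  ring_nf

lemma exp_pi_I (r : ℝ) : Complex.exp (Real.pi * Complex.I * r) = (Real.cos (Real.pi * r) : ℂ) + (Real.sin (Real.pi * r) : ℂ) * Complex.I := by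
  rw [show (Real.pi : ℂ) * Complex.I * r = ((Real.pi * r : ℝ) : ℂ) * Complex.I by push_cast; ring,
    Complex.exp_mul_I, Complex.ofReal_cos, Complex.ofReal_sin]

lemma entry_diag (f g : ℝ) (hf : Real.sin (Real.pi * f) ≠ 0) (hg : Real.sin (Real.pi * g) ≠ 0) :
    (1 - Complex.exp (2 * Real.pi * Complex.I * f) * Complex.exp (2 * Real.pi * Complex.I * g)) /
      ((1 - Complex.exp (2 * Real.pi * Complex.I * f)) * (1 - Complex.exp (2 * Real.pi * Complex.I * g))) =
    Complex.I * (Real.sin (Real.pi * (f+g)) : ℂ) / (2 * (Real.sin (Real.pi * f) : ℂ) * (Real.sin (Real.pi * g) : ℂ)) := by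
  rw [← Complex.exp_add, show 2 * (Real.pi:ℂ) * Complex.I * f + 2 * Real.pi * Complex.I * g = 2 * Real.pi * Complex.I * ((f+g : ℝ) : ℂ) by push_cast; ring]
  rw [show (2 * (Real.pi:ℂ) * Complex.I * ((f+g : ℝ) : ℂ)) = 2 * Real.pi * Complex.I * ((f+g : ℝ)) by norm_cast]
  rw [one_sub_exp (f+g), one_sub_exp f, one_sub_exp g]
  rw [show ((Real.pi:ℂ)) * Complex.I * ((f+g : ℝ):ℂ) = Real.pi * Complex.I * f + Real.pi * Complex.I * g by push_cast; ring, Complex.exp_add]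
  have e1 := Complex.exp_ne_zero ((Real.pi:ℂ) * Complex.I * f)
  have e2 := Complex.exp_ne_zero ((Real.pi:ℂ) * Complex.I * g)
  have hf' : ((Real.sin (Real.pi * f) : ℝ) : ℂ) ≠ 0 := by exact_mod_cast hf
  have hg' : ((Real.sin (Real.pi * g) : ℝ) : ℂ) ≠ 0 := by exact_mod_cast hg
  rw [div_eq_div_iff]
  · linear_combination (-(4:ℂ) * Complex.I * (Real.sin (Real.pi * (f+g)) : ℂ) * (Real.sin (Real.pi * f) : ℂ) * (Real.sin (Real.pi * g) : ℂ) * Complex.exp ((Real.pi:ℂ) * Complex.I * f) * Complex.exp ((Real.pi:ℂ) * Complex.I * g)) * Complex.I_sq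
  · exact mul_ne_zero
      (mul_ne_zero (mul_ne_zero (mul_ne_zero (by norm_num) Complex.I_ne_zero) hf') e1)
      (mul_ne_zero (mul_ne_zero (mul_ne_zero (by norm_num) Complex.I_ne_zero) hg') e2)
  · exact mul_ne_zero (mul_ne_zero (by norm_num) hf') hg'

lemma entry_01 (g : ℝ) (hg : Real.sin (Real.pi * g) ≠ 0) :
    -(Complex.exp (2 * Real.pi * Complex.I * g)) / (1 - Complex.exp (2 * Real.pi * Complex.I * g)) =
    ((Real.sin (Real.pi * g) : ℂ) - Complex.I * (Real.cos (Real.pi * g) : ℂ)) / (2 * (Real.sin (Real.pi * g) : ℂ)) := by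
  have hg' : ((Real.sin (Real.pi * g) : ℝ) : ℂ) ≠ 0 := by exact_mod_cast hg
  have hE : ((Real.cos (Real.pi * g) : ℂ) + (Real.sin (Real.pi * g) : ℂ) * Complex.I) ≠ 0 := by
    rw [← exp_pi_I]; exact Complex.exp_ne_zero _
  rw [one_sub_exp, exp_pi_I]
  rw [show (2 : ℂ) * Real.pi * Complex.I * g = Real.pi * Complex.I * g + Real.pi * Complex.I * g by ring, Complex.exp_add, exp_pi_I]
  rw [div_eq_div_iff]
  · linear_combination (-2 * (Real.sin (Real.pi * g) : ℂ) * ((Real.cos (Real.pi * g) : ℂ) + (Real.sin (Real.pi * g) : ℂ) * Complex.I) * (Real.cos (Real.pi * g) : ℂ)) * Complex.I_sq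
  · exact mul_ne_zero (mul_ne_zero (mul_ne_zero (by norm_num) Complex.I_ne_zero) hg') hE
  · exact mul_ne_zero (by norm_num) hg'

lemma entry_10 (g : ℝ) (hg : Real.sin (Real.pi * g) ≠ 0) :
    -1 / (1 - Complex.exp (2 * Real.pi * Complex.I * g)) =
    (-(Real.sin (Real.pi * g) : ℂ) - Complex.I * (Real.cos (Real.pi * g) : ℂ)) / (2 * (Real.sin (Real.pi * g) : ℂ)) := by
  have hg' : ((Real.sin (Real.pi * g) : ℝ) : ℂ) ≠ 0 := by exact_mod_cast hg
  have hE : ((Real.cos (Real.pi * g) : ℂ) + (Real.sin (Real.pi * g) : ℂ) * Complex.I) ≠ 0 := by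
    rw [← exp_pi_I]; exact Complex.exp_ne_zero _
  have hpy : ((Real.sin (Real.pi * g) : ℂ))^2 + ((Real.cos (Real.pi * g) : ℂ))^2 = 1 := by
    have := Real.sin_sq_add_cos_sq (Real.pi * g)
    exact_mod_cast congrArg (fun x : ℝ => (x:ℂ)) this
  rw [one_sub_exp, exp_pi_I]
  rw [div_eq_div_iff]
  · linear_combination (-2 * Complex.I^2 * (Real.sin (Real.pi * g) : ℂ)) * hpy +
      (-2 * (Real.sin (Real.pi * g) : ℂ) - 2 * Complex.I * (Real.sin (Real.pi * g) : ℂ)^2 * (Real.cos (Real.pi * g) : ℂ)) * Complex.I_sq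
  · exact mul_ne_zero (mul_ne_zero (mul_ne_zero (by norm_num) Complex.I_ne_zero) hg') hE
  · exact mul_ne_zero (by norm_num) hg'

lemma trig3 (x y z : ℝ) :
    Real.sin (x+y) * Real.sin (y+z) - Real.sin x * Real.sin z = Real.sin y * Real.sin (x+y+z) := by
  rw [Real.sin_add, Real.sin_add, show x+y+z = (x+y)+z by ring, Real.sin_add, Real.sin_add, Real.cos_add]
  linear_combination (Real.sin x * Real.sin z) * (Real.sin_sq_add_cos_sq y)

noncomputable def Qf (α γ p q : ℝ) (v : Fin 2 → ℂ) : ℂ :=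
  (α:ℂ) * (v 0 * (starRingEnd ℂ) (v 0)) + ((p:ℂ) + (q:ℂ) * I) * ((starRingEnd ℂ) (v 0) * v 1)
    + ((p:ℂ) - (q:ℂ) * I) * (v 0 * (starRingEnd ℂ) (v 1)) + (γ:ℂ) * (v 1 * (starRingEnd ℂ) (v 1))

lemma quad_key (α γ p q : ℝ) (hq : q ≠ 0) :
    (∀ v : Fin 2 → ℂ, v ≠ 0 → Qf α γ p q v ≠ 0) ↔ 0 < α * γ - (p^2 + q^2) := by
  constructor
  · intro h
    by_contra hle
    push_neg at hle
    rcases eq_or_ne α 0 with hα | hα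
    · have hβ' : ((p:ℂ) + (q:ℂ)*I) ≠ 0 := by
        intro h0
        have := congrArg Complex.im h0
        simp at this
        exact hq this
      have hβ : ((p:ℂ) - (q:ℂ)*I) ≠ 0 := by
        intro h0
        have := congrArg Complex.im h0
        simp at this
        exact hq this
      set v0 : ℂ := -(γ:ℂ) / (2 * ((p:ℂ) - (q:ℂ)*I)) with hv0
      have hv : (![v0, 1] : Fin 2 → ℂ) ≠ 0 := by
        intro h0
        have := congrFun h0 1
        simp at this
      apply h ![v0, 1] hv
      have hc : (starRingEnd ℂ) v0 = -(γ:ℂ) / (2 * ((p:ℂ) + (q:ℂ)*I)) := by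
        rw [hv0]
        simp [map_div₀, _root_.map_mul, Complex.conj_I, map_ofNat]
      have h1 : ((p:ℂ) + (q:ℂ)*I) * ((starRingEnd ℂ) v0) = -(γ:ℂ)/2 := by
        rw [hc]; field_simp
      have h2 : ((p:ℂ) - (q:ℂ)*I) * v0 = -(γ:ℂ)/2 := by
        rw [hv0]; field_simp
      simp only [Qf, hα, Matrix.cons_val_zero, Matrix.cons_val_one, Matrix.head_cons, _root_.map_one]
      rw [show ((p:ℂ) + (q:ℂ)*I) * ((starRingEnd ℂ) v0 * 1) = ((p:ℂ) + (q:ℂ)*I) * ((starRingEnd ℂ) v0) by ring, h1]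
      rw [show ((p:ℂ) - (q:ℂ)*I) * (v0 * 1) = ((p:ℂ) - (q:ℂ)*I) * v0 by ring, h2]
      push_cast
      ring
    · set t : ℝ := Real.sqrt (p^2 + q^2 - α*γ) with ht
      have ht2 : t^2 = p^2 + q^2 - α*γ := Real.sq_sqrt (by linarith)
      set v0 : ℂ := ((t:ℂ) - ((p:ℂ) + (q:ℂ)*I)) / α with hv0
      have hα' : (α:ℂ) ≠ 0 := by exact_mod_cast hα
      have hv : (![v0, 1] : Fin 2 → ℂ) ≠ 0 := by
        intro h0
        have := congrFun h0 1
        simp at this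
      apply h ![v0, 1] hv
      have hc : (starRingEnd ℂ) v0 = ((t:ℂ) - ((p:ℂ) - (q:ℂ)*I)) / α := by
        rw [hv0]
        simp [map_div₀, _root_.map_sub, _root_.map_mul, Complex.conj_I, Complex.conj_ofReal]
        ring_nf
      have key : (α:ℂ) * Qf α γ p q ![v0, 1] = (t:ℂ)^2 - ((p:ℂ)^2 + (q:ℂ)^2 - (α:ℂ)*(γ:ℂ)) := by
        simp only [Qf, Matrix.cons_val_zero, Matrix.cons_val_one, Matrix.head_cons, _root_.map_one]
        rw [hc, hv0]
        field_simp
        linear_combination ((q:ℂ)^2) * Complex.I_sq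
      have hz : (α:ℂ) * Qf α γ p q ![v0, 1] = 0 := by
        rw [key]
        have hc2 : ((t^2 : ℝ) : ℂ) = ((p^2+q^2-α*γ : ℝ) : ℂ) := by exact_mod_cast congrArg (fun x : ℝ => (x:ℂ)) ht2
        push_cast at hc2
        linear_combination hc2
      exact (mul_eq_zero.mp hz).resolve_left hα'
  · intro hΔ v hv hQ
    have hαγ : 0 < α * γ := by nlinarith [sq_nonneg p, sq_nonneg q, hq]
    have hα : α ≠ 0 := by rintro rfl; simp at hαγ
    have hα' : (α:ℂ) ≠ 0 := by exact_mod_cast hα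
    set N : ℂ := (α:ℂ) * v 0 + ((p:ℂ) + (q:ℂ)*I) * v 1 with hN
    have key : (α:ℂ) * Qf α γ p q v = N * (starRingEnd ℂ) N + ((α*γ - (p^2+q^2) : ℝ) : ℂ) * (v 1 * (starRingEnd ℂ) (v 1)) := by
      simp only [Qf, hN, _root_.map_add, _root_.map_mul, _root_.map_sub, Complex.conj_I, Complex.conj_ofReal]
      push_cast
      linear_combination ((q:ℂ)^2 * (v 1 * (starRingEnd ℂ) (v 1))) * Complex.I_sq
    rw [hQ, mul_zero] at key
    rw [Complex.mul_conj, Complex.mul_conj] at key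
    have keyR : (0:ℝ) = Complex.normSq N + (α*γ - (p^2+q^2)) * Complex.normSq (v 1) := by
      exact_mod_cast key
    have h1 : Complex.normSq (v 1) = 0 := by
      nlinarith [Complex.normSq_nonneg N, Complex.normSq_nonneg (v 1)]
    have hv1 : v 1 = 0 := Complex.normSq_eq_zero.mp h1
    have hN0 : N = 0 := by
      have : Complex.normSq N = 0 := by rw [h1] at keyR; linarith [keyR]
      exact Complex.normSq_eq_zero.mp this
    have hv0 : v 0 = 0 := by
      rw [hN, hv1, mul_zero, add_zero, mul_eq_zero] at hN0
      exact hN0.resolve_left hα'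
    apply hv
    funext i
    fin_cases i <;> simp [hv0, hv1]

set_option maxHeartbeats 2000000 in
lemma pointwise (d : ℕ) (hd : 2 ≤ d) (k : Fin 3 → ℤ)
    (hk : ∀ j, 1 ≤ k j ∧ k j ≤ (d : ℤ) - 1) (s : ℤ) (hs : Int.gcd s d = 1) :
    ((∑ j, Int.fract ((k j : ℝ) * s / d) < 1 ∨
      ∑ j, Int.fract (-((k j : ℝ) * s) / d) < 1) ↔ (hMat d k s).IsAnisotropic) := by
  have hd0 : (d:ℝ) ≠ 0 := by positivity
  set f : Fin 3 → ℝ := fun j => Int.fract ((k j : ℝ) * s / d) with hfdef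
  -- d does not divide k j * s
  have hndvd : ∀ j, ¬ ((d:ℤ) ∣ k j * s) := by
    intro j hdvd
    have hco : IsCoprime (d:ℤ) s := by
      rw [Int.isCoprime_iff_gcd_eq_one, Int.gcd_comm]; exact hs
    have hdk : (d:ℤ) ∣ k j := hco.dvd_of_dvd_mul_right hdvd
    have h1 := (hk j).1
    have h2 := (hk j).2
    have := Int.le_of_dvd (by linarith) hdk
    linarith
  have hfpos : ∀ j, 0 < f j := by
    intro j
    rcases lt_or_eq_of_le (Int.fract_nonneg ((k j : ℝ) * s / d)) with h | h
    · exact h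
    · exfalso
      apply hndvd j
      have h0 : (k j : ℝ) * s / d - ⌊(k j : ℝ) * s / d⌋ = 0 := by
        rw [Int.self_sub_floor, ← h]
      have hx : (k j : ℝ) * s / d = (⌊(k j : ℝ) * s / d⌋ : ℝ) := by linarith
      have h1 : (k j : ℝ) * s = (⌊(k j : ℝ) * s / d⌋ : ℝ) * d := (div_eq_iff hd0).mp hx
      have h2 : k j * s = ⌊(k j : ℝ) * s / d⌋ * d := by exact_mod_cast h1
      exact ⟨⌊(k j : ℝ) * s / d⌋, by linarith⟩
  have hflt : ∀ j, f j < 1 := fun j => Int.fract_lt_one _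
  set a : Fin 3 → ℝ := fun j => Real.sin (Real.pi * f j) with hadef
  have hapos : ∀ j, 0 < a j := by
    intro j
    apply Real.sin_pos_of_pos_of_lt_pi
    · exact mul_pos Real.pi_pos (hfpos j)
    · calc Real.pi * f j < Real.pi * 1 := by
            exact mul_lt_mul_of_pos_left (hflt j) Real.pi_pos
        _ = Real.pi := mul_one _
  have hane : ∀ j, Real.sin (Real.pi * f j) ≠ 0 := fun j => ne_of_gt (hapos j)
  set b1 : ℝ := Real.cos (Real.pi * f 1) with hb1def
  set σ01 : ℝ := Real.sin (Real.pi * (f 0 + f 1)) with hs01def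
  set σ12 : ℝ := Real.sin (Real.pi * (f 1 + f 2)) with hs12def
  set α : ℝ := a 2 * σ01 with hαdef
  set γ : ℝ := a 0 * σ12 with hγdef
  set p : ℝ := -(a 0 * a 2 * b1) with hpdef
  set q : ℝ := -(a 0 * a 1 * a 2) with hqdef
  -- reduce exponentials mod 1
  have hx : ∀ j, Complex.exp (2 * Real.pi * Complex.I * ((k j * s : ℤ) : ℂ) / d)
      = Complex.exp (2 * Real.pi * Complex.I * ((f j : ℝ) : ℂ)) := by
    intro j
    have harg : (2 * (Real.pi:ℂ) * Complex.I * ((k j * s : ℤ) : ℂ) / d)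
        = 2 * Real.pi * Complex.I * ((f j : ℝ) : ℂ) + ((⌊(k j : ℝ) * s / d⌋ : ℤ) : ℂ) * (2 * Real.pi * Complex.I) := by
      have hf : (f j : ℝ) = (k j : ℝ) * s / d - ⌊(k j : ℝ) * s / d⌋ := rfl
      rw [hf]
      have hd0' : (d : ℂ) ≠ 0 := by exact_mod_cast hd0
      push_cast
      field_simp
      ring
    rw [harg, Complex.exp_add, Complex.exp_int_mul_two_pi_mul_I, mul_one]
  -- matrix entries
  have e00 : hMat d k s 0 0 = Complex.I * (σ01 : ℂ) / (2 * (a 0 : ℂ) * (a 1 : ℂ)) := by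
    simp only [hMat, Matrix.cons_val', Matrix.cons_val_zero, Matrix.empty_val',
      Matrix.cons_val_fin_one, Matrix.of_apply]
    rw [hx 0, hx 1]
    exact entry_diag (f 0) (f 1) (hane 0) (hane 1)
  have e01 : hMat d k s 0 1 = ((a 1 : ℂ) - Complex.I * (b1 : ℂ)) / (2 * (a 1 : ℂ)) := by
    simp only [hMat, Matrix.cons_val', Matrix.cons_val_zero, Matrix.cons_val_one,
      Matrix.head_cons, Matrix.empty_val', Matrix.cons_val_fin_one, Matrix.of_apply]
    rw [hx 1]
    exact entry_01 (f 1) (hane 1)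
  have e10 : hMat d k s 1 0 = (-(a 1 : ℂ) - Complex.I * (b1 : ℂ)) / (2 * (a 1 : ℂ)) := by
    simp only [hMat, Matrix.cons_val', Matrix.cons_val_zero, Matrix.cons_val_one,
      Matrix.head_cons, Matrix.head_fin_const, Matrix.empty_val', Matrix.cons_val_fin_one, Matrix.of_apply]
    rw [hx 1]
    exact entry_10 (f 1) (hane 1)
  have e11 : hMat d k s 1 1 = Complex.I * (σ12 : ℂ) / (2 * (a 1 : ℂ) * (a 2 : ℂ)) := by
    simp only [hMat, Matrix.cons_val', Matrix.cons_val_one, Matrix.head_cons,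
      Matrix.head_fin_const, Matrix.empty_val', Matrix.cons_val_fin_one, Matrix.of_apply]
    rw [hx 1, hx 2]
    exact entry_diag (f 1) (f 2) (hane 1) (hane 2)
  set sc : ℂ := (-2) * Complex.I * (a 0 : ℂ) * (a 1 : ℂ) * (a 2 : ℂ) with hscdef
  have ha0 : ((a 0 : ℝ) : ℂ) ≠ 0 := by exact_mod_cast ne_of_gt (hapos 0)
  have ha1 : ((a 1 : ℝ) : ℂ) ≠ 0 := by exact_mod_cast ne_of_gt (hapos 1)
  have ha2 : ((a 2 : ℝ) : ℂ) ≠ 0 := by exact_mod_cast ne_of_gt (hapos 2)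
  have hsc : sc ≠ 0 := by
    rw [hscdef]
    exact mul_ne_zero (mul_ne_zero (mul_ne_zero (mul_ne_zero (by norm_num) Complex.I_ne_zero) ha0) ha1) ha2
  have c00 : sc * hMat d k s 0 0 = ((α : ℝ) : ℂ) := by
    rw [e00, hscdef, hαdef, ← mul_div_assoc, div_eq_iff (by exact mul_ne_zero (mul_ne_zero (by norm_num) ha0) ha1)]
    push_cast
    linear_combination (-2 * (σ01 : ℂ) * (a 0 : ℂ) * (a 1 : ℂ) * (a 2 : ℂ)) * Complex.I_sq
  have c11 : sc * hMat d k s 1 1 = ((γ : ℝ) : ℂ) := by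
    rw [e11, hscdef, hγdef, ← mul_div_assoc, div_eq_iff (by exact mul_ne_zero (mul_ne_zero (by norm_num) ha1) ha2)]
    push_cast
    linear_combination (-2 * (σ12 : ℂ) * (a 0 : ℂ) * (a 1 : ℂ) * (a 2 : ℂ)) * Complex.I_sq
  have c01 : sc * hMat d k s 0 1 = ((p : ℝ) : ℂ) + ((q : ℝ) : ℂ) * Complex.I := by
    rw [e01, hscdef, hpdef, hqdef, ← mul_div_assoc, div_eq_iff (by exact mul_ne_zero (by norm_num) ha1)]
    push_cast
    linear_combination (2 * (a 0 : ℂ) * (a 1 : ℂ) * (a 2 : ℂ) * (b1 : ℂ)) * Complex.I_sq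
  have c10 : sc * hMat d k s 1 0 = ((p : ℝ) : ℂ) - ((q : ℝ) : ℂ) * Complex.I := by
    rw [e10, hscdef, hpdef, hqdef, ← mul_div_assoc, div_eq_iff (by exact mul_ne_zero (by norm_num) ha1)]
    push_cast
    linear_combination (2 * (a 0 : ℂ) * (a 1 : ℂ) * (a 2 : ℂ) * (b1 : ℂ)) * Complex.I_sq
  have key : ∀ v : Fin 2 → ℂ,
      sc * dotProduct (star v) ((hMat d k s).mulVec v) = Qf α γ p q v := by
    intro v
    have expand : sc * dotProduct (star v) ((hMat d k s).mulVec v)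
        = (sc * hMat d k s 0 0) * (v 0 * (starRingEnd ℂ) (v 0))
          + (sc * hMat d k s 0 1) * ((starRingEnd ℂ) (v 0) * v 1)
          + (sc * hMat d k s 1 0) * (v 0 * (starRingEnd ℂ) (v 1))
          + (sc * hMat d k s 1 1) * (v 1 * (starRingEnd ℂ) (v 1)) := by
      simp only [dotProduct, Matrix.mulVec, Fin.sum_univ_two, Pi.star_apply,
        Complex.star_def]
      ring
    rw [expand, c00, c01, c10, c11]
    simp only [Qf]
  have haniso : (hMat d k s).IsAnisotropic ↔ ∀ v : Fin 2 → ℂ, v ≠ 0 → Qf α γ p q v ≠ 0 := by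
    constructor
    · intro h v hv
      rw [← key v]
      exact mul_ne_zero hsc (h v hv)
    · intro h v hv hz
      apply h v hv
      rw [← key v, hz, mul_zero]
  -- determinant computation
  have hΔeq : α * γ - (p^2 + q^2) = a 0 * a 1 * a 2 * Real.sin (Real.pi * f 0 + Real.pi * f 1 + Real.pi * f 2) := by
    have h3 := trig3 (Real.pi * f 0) (Real.pi * f 1) (Real.pi * f 2)
    have hp := Real.sin_sq_add_cos_sq (Real.pi * f 1)
    rw [hαdef, hγdef, hpdef, hqdef, hs01def, hs12def, hadef]
    simp only
    rw [show Real.pi * (f 0 + f 1) = Real.pi * f 0 + Real.pi * f 1 by ring,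
        show Real.pi * (f 1 + f 2) = Real.pi * f 1 + Real.pi * f 2 by ring]
    rw [hb1def]
    linear_combination (Real.sin (Real.pi * f 0) * Real.sin (Real.pi * f 2)) * h3 -
      (Real.sin (Real.pi * f 0)^2 * Real.sin (Real.pi * f 2)^2) * hp
  set F : ℝ := f 0 + f 1 + f 2 with hFdef
  have hF0 : 0 < F := by
    have := hfpos 0; have := hfpos 1; have := hfpos 2
    rw [hFdef]; linarith
  have hF3 : F < 3 := by
    have := hflt 0; have := hflt 1; have := hflt 2
    rw [hFdef]; linarith
  have hargF : Real.pi * f 0 + Real.pi * f 1 + Real.pi * f 2 = Real.pi * F := by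
    rw [hFdef]; ring
  have hsign : 0 < Real.sin (Real.pi * F) ↔ (F < 1 ∨ 2 < F) := by
    constructor
    · intro h
      by_contra hc
      push_neg at hc
      obtain ⟨h1, h2⟩ := hc
      have : Real.sin (Real.pi * F) ≤ 0 := by
        have harg : Real.pi * F = Real.pi * (F - 1) + Real.pi := by ring
        rw [harg, Real.sin_add_pi]
        have : 0 ≤ Real.sin (Real.pi * (F - 1)) := by
          apply Real.sin_nonneg_of_nonneg_of_le_pi
          · nlinarith [Real.pi_pos]
          · nlinarith [Real.pi_pos]
        linarith
      linarith
    · rintro (h | h)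
      · apply Real.sin_pos_of_pos_of_lt_pi
        · positivity
        · nlinarith [Real.pi_pos]
      · have harg : Real.pi * F = Real.pi * (F - 2) + 2 * Real.pi := by ring
        rw [harg, Real.sin_add_two_pi]
        apply Real.sin_pos_of_pos_of_lt_pi
        · nlinarith [Real.pi_pos]
        · nlinarith [Real.pi_pos]
  -- the fract sums
  have hsum1 : ∑ j, Int.fract ((k j : ℝ) * s / d) = F := by
    rw [Fin.sum_univ_three, hFdef]
  have hsum2 : ∑ j, Int.fract (-((k j : ℝ) * s) / d) = 3 - F := by
    have heach : ∀ j, Int.fract (-((k j : ℝ) * s) / d) = 1 - f j := by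
      intro j
      rw [neg_div, Int.fract_neg]
      exact ne_of_gt (hfpos j)
    rw [Fin.sum_univ_three, heach 0, heach 1, heach 2, hFdef]
    ring
  have hq0 : q ≠ 0 := by
    have h0 := hapos 0; have h1 := hapos 1; have h2 := hapos 2
    have hm : 0 < a 0 * a 1 * a 2 := by positivity
    rw [hqdef]
    intro hq0
    rw [neg_eq_zero] at hq0
    rw [hq0] at hm
    exact lt_irrefl 0 hm
  rw [hsum1, hsum2, haniso, quad_key α γ p q hq0, hΔeq, hargF]
  have hpos : 0 < a 0 * a 1 * a 2 := by
    have := hapos 0; have := hapos 1; have := hapos 2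
    positivity
  rw [show (0 < a 0 * a 1 * a 2 * Real.sin (Real.pi * F)) ↔ (0 < Real.sin (Real.pi * F)) by
    constructor
    · intro h; nlinarith
    · intro h; nlinarith]
  rw [hsign]
  constructor
  · rintro (h | h)
    · exact Or.inl h
    · exact Or.inr (by linarith)
  · rintro (h | h)
    · exact Or.inl h
    · exact Or.inr (by linarith)

end CondSAniso

theorem condS_iff_anisotropic (d : ℕ) (hd : 2 ≤ d)
    (k : Fin 3 → ℤ)
    (hk : ∀ j, 1 ≤ k j ∧ k j ≤ (d : ℤ) - 1)
    (hgcd : Int.gcd (d : ℤ) (Finset.univ.gcd k) = 1) :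
    CondS d k ↔ ∀ s : ℤ, Int.gcd s d = 1 → (hMat d k s).IsAnisotropic := by
  constructor
  · intro h s hs
    exact (CondSAniso.pointwise d hd k hk s hs).mp (h s hs)
  · intro h s hs
    exact (CondSAniso.pointwise d hd k hk s hs).mpr (h s hs)
end

section
/- Let x_1, x_2, x_3 be roots of unity in ℂ, and let Γ be the subgroup of GL_2(ℂ) generated by A = [[x_1x_2, 1−x_1],[0,1]] and B = [[1,0],[x_2(1−x_3), x_2x_3]]. Assume Γ is finite and acts irreducibly on ℂ² (the only Γ-invariant subspaces of ℂ² are 0 and ℂ²). Then Γ has an abelian normal subgroup of index two if and only if at least two of the three numbers x_1x_2, x_2x_3, x_3x_1 are equal to −1. -/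
open Matrix

section Aux

/-- A common eigenvector for a commuting set of 2×2 complex matrices. -/
lemma exists_common_eigvec (S : Set (Matrix (Fin 2) (Fin 2) ℂ))
    (hcomm : ∀ M ∈ S, ∀ P ∈ S, M * P = P * M) :
    ∃ v : Fin 2 → ℂ, v ≠ 0 ∧ ∀ M ∈ S, ∃ c : ℂ, M.mulVec v = c • v := by
  by_cases hsc : ∀ M ∈ S, ∃ c : ℂ, M = c • (1 : Matrix (Fin 2) (Fin 2) ℂ)
  · refine ⟨![1,0], ?_, ?_⟩
    · intro h; simpa using congrFun h 0
    · intro M hM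
      obtain ⟨c, rfl⟩ := hsc M hM
      exact ⟨c, by simp [Matrix.smul_mulVec]⟩
  · push_neg at hsc
    obtain ⟨M, hMS, hM⟩ := hsc
    obtain ⟨μ, hev⟩ := Module.End.exists_eigenvalue M.mulVecLin
    set E := Module.End.eigenspace M.mulVecLin μ with hEdef
    have hEbot : E ≠ ⊥ := hev
    have hEtop : E ≠ ⊤ := by
      intro htop
      apply hM μ
      have : ∀ v : Fin 2 → ℂ, M.mulVec v = μ • v := by
        intro v
        have hv : v ∈ E := htop ▸ Submodule.mem_top
        simpa [Matrix.mulVecLin_apply] using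
          (Module.End.mem_eigenspace_iff.mp hv)
      ext i j
      have := congrFun (this (Pi.single j 1)) i
      simp [Matrix.mulVec_single, Matrix.smul_apply, Pi.single_apply, Matrix.one_apply] at this ⊢
      simpa [mul_comm] using this
    obtain ⟨v, hvE, hv0⟩ := Submodule.exists_mem_ne_zero_of_ne_bot hEbot
    have hspan : Submodule.span ℂ {v} = E := by
      apply Submodule.eq_of_le_of_finrank_le
        ((Submodule.span_singleton_le_iff_mem v E).mpr hvE)
      have h1 : Module.finrank ℂ (Submodule.span ℂ {v}) = 1 := finrank_span_singleton hv0
      have h2 : Module.finrank ℂ E < 2 := by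
        have := Submodule.finrank_lt (K := ℂ) (V := Fin 2 → ℂ) hEtop
        simpa using this
      omega
    refine ⟨v, hv0, ?_⟩
    intro P hPS
    have hPv : P.mulVec v ∈ E := by
      rw [hEdef, Module.End.mem_eigenspace_iff]
      have h1 : M.mulVec (P.mulVec v) = P.mulVec (M.mulVec v) := by
        rw [Matrix.mulVec_mulVec, Matrix.mulVec_mulVec, hcomm M hMS P hPS]
      have h2 : M.mulVec v = μ • v := by
        simpa [Matrix.mulVecLin_apply] using Module.End.mem_eigenspace_iff.mp hvE
      simp only [Matrix.mulVecLin_apply, h1, h2, Matrix.mulVec_smul]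
    rw [← hspan] at hPv
    obtain ⟨c, hc⟩ := Submodule.mem_span_singleton.mp hPv
    exact ⟨c, hc.symm⟩

lemma span_singleton_ne_top (v : Fin 2 → ℂ) : Submodule.span ℂ {v} ≠ ⊤ := by
  intro h
  have h1 : Module.finrank ℂ (Submodule.span ℂ {v}) ≤ 1 :=
    finrank_span_le_card ({v} : Set (Fin 2 → ℂ)) |>.trans (by simp)
  rw [h, finrank_top, Module.finrank_fin_fun] at h1
  omega

lemma no_invariant_line (Γ : Subgroup (Matrix (Fin 2) (Fin 2) ℂ)ˣ)
    (hirr : ∀ W : Submodule ℂ (Fin 2 → ℂ),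
      (∀ γ ∈ Γ, ∀ w ∈ W, (γ : Matrix (Fin 2) (Fin 2) ℂ).mulVec w ∈ W) → W = ⊥ ∨ W = ⊤)
    (v : Fin 2 → ℂ) (hv : v ≠ 0)
    (hinv : ∀ γ ∈ Γ, ((γ : (Matrix (Fin 2) (Fin 2) ℂ)ˣ) : Matrix (Fin 2) (Fin 2) ℂ).mulVec v
      ∈ Submodule.span ℂ {v}) : False := by
  have hW : ∀ γ ∈ Γ, ∀ w ∈ Submodule.span ℂ {v},
      ((γ : (Matrix (Fin 2) (Fin 2) ℂ)ˣ) : Matrix (Fin 2) (Fin 2) ℂ).mulVec w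
        ∈ Submodule.span ℂ {v} := by
    intro γ hγ w hw
    obtain ⟨k, rfl⟩ := Submodule.mem_span_singleton.mp hw
    rw [Matrix.mulVec_smul]
    exact Submodule.smul_mem _ k (hinv γ hγ)
  rcases hirr _ hW with h | h
  · have : v ∈ Submodule.span ℂ {v} := Submodule.mem_span_singleton_self v
    rw [h] at this
    exact hv (by simpa using this)
  · exact span_singleton_ne_top v h

lemma not_all_commute (Γ : Subgroup (Matrix (Fin 2) (Fin 2) ℂ)ˣ)
    (hirr : ∀ W : Submodule ℂ (Fin 2 → ℂ),
      (∀ γ ∈ Γ, ∀ w ∈ W, (γ : Matrix (Fin 2) (Fin 2) ℂ).mulVec w ∈ W) → W = ⊥ ∨ W = ⊤) :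
    ¬ ∀ g h : Γ, g * h = h * g := by
  intro hcomm
  obtain ⟨v, hv0, hveig⟩ := exists_common_eigvec
      {m | ∃ g : Γ, m = ((g : (Matrix (Fin 2) (Fin 2) ℂ)ˣ) : Matrix (Fin 2) (Fin 2) ℂ)} (by
    rintro M ⟨g, rfl⟩ P ⟨h, rfl⟩
    have h' := congrArg
      (fun u : Γ => ((u : (Matrix (Fin 2) (Fin 2) ℂ)ˣ) : Matrix (Fin 2) (Fin 2) ℂ))
      (hcomm g h)
    simpa using h')
  apply no_invariant_line Γ hirr v hv0
  intro γ hγ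
  obtain ⟨c, hc⟩ := hveig _ ⟨⟨γ, hγ⟩, rfl⟩
  rw [show (γ : Matrix (Fin 2) (Fin 2) ℂ)
      = (((⟨γ, hγ⟩ : Γ) : (Matrix (Fin 2) (Fin 2) ℂ)ˣ) : Matrix (Fin 2) (Fin 2) ℂ) from rfl, hc]
  exact Submodule.smul_mem _ c (Submodule.mem_span_singleton_self v)

lemma trace_eq_zero_of_swap (M : Matrix (Fin 2) (Fin 2) ℂ) (v w : Fin 2 → ℂ)
    (hdet : v 0 * w 1 - w 0 * v 1 ≠ 0)
    (hc : ∃ c : ℂ, M.mulVec v = c • w) (hd : ∃ d : ℂ, M.mulVec w = d • v) :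
    M.trace = 0 := by
  obtain ⟨c, hc⟩ := hc
  obtain ⟨d, hd⟩ := hd
  set P : Matrix (Fin 2) (Fin 2) ℂ := !![v 0, w 0; v 1, w 1] with hP
  have hPdet : IsUnit P.det := by
    rw [hP, Matrix.det_fin_two_of]
    exact isUnit_iff_ne_zero.mpr (by ring_nf; ring_nf at hdet; exact hdet)
  set T : Matrix (Fin 2) (Fin 2) ℂ := !![0, d; c, 0] with hT
  have hc0 := congrFun hc 0
  have hc1 := congrFun hc 1
  have hd0 := congrFun hd 0
  have hd1 := congrFun hd 1
  simp [Matrix.mulVec, dotProduct, Fin.sum_univ_two] at hc0 hc1 hd0 hd1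
  have hMP : M * P = P * T := by
    ext i j
    fin_cases i <;> fin_cases j <;>
      simp [hP, hT, Matrix.mul_apply, Fin.sum_univ_two] <;>
      first
        | linear_combination hc0
        | linear_combination hc1
        | linear_combination hd0
        | linear_combination hd1
  have : M.trace = T.trace := by
    calc M.trace = (M * (P * P⁻¹)).trace := by rw [Matrix.mul_nonsing_inv _ hPdet, mul_one]
    _ = ((M * P) * P⁻¹).trace := by rw [mul_assoc]
    _ = (P⁻¹ * (M * P)).trace := Matrix.trace_mul_comm _ _
    _ = (P⁻¹ * (P * T)).trace := by rw [hMP]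
    _ = ((P⁻¹ * P) * T).trace := by rw [mul_assoc]
    _ = T.trace := by rw [Matrix.nonsing_inv_mul _ hPdet, one_mul]
  rw [this, hT]
  simp [Matrix.trace_fin_two]

lemma det_pair_ne_zero {v w : Fin 2 → ℂ} (hv : v ≠ 0)
    (hw : w ∉ Submodule.span ℂ {v}) : v 0 * w 1 - w 0 * v 1 ≠ 0 := by
  intro h
  apply hw
  have hv' : v 0 ≠ 0 ∨ v 1 ≠ 0 := by
    by_contra hcon
    push_neg at hcon
    exact hv (funext fun i => by fin_cases i <;> simp [hcon.1, hcon.2])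
  rcases hv' with h0 | h1
  · refine Submodule.mem_span_singleton.mpr ⟨w 0 / v 0, funext fun i => ?_⟩
    fin_cases i <;> simp only [Fin.zero_eta, Fin.mk_one, Pi.smul_apply, smul_eq_mul] <;> field_simp <;> linear_combination -h
  · refine Submodule.mem_span_singleton.mpr ⟨w 1 / v 1, funext fun i => ?_⟩
    fin_cases i <;> simp only [Fin.zero_eta, Fin.mk_one, Pi.smul_apply, smul_eq_mul] <;> field_simp <;> linear_combination h

lemma trace_zero_of_not_mem (Γ : Subgroup (Matrix (Fin 2) (Fin 2) ℂ)ˣ)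
    (hirr : ∀ W : Submodule ℂ (Fin 2 → ℂ),
      (∀ γ ∈ Γ, ∀ w ∈ W, (γ : Matrix (Fin 2) (Fin 2) ℂ).mulVec w ∈ W) → W = ⊥ ∨ W = ⊤)
    (N : Subgroup Γ) (hnorm : N.Normal) (hidx : N.index = 2)
    (hcomm : ∀ a ∈ N, ∀ b ∈ N, a * b = b * a)
    (τ : Γ) (hτ : τ ∉ N) :
    Matrix.trace ((τ : (Matrix (Fin 2) (Fin 2) ℂ)ˣ) : Matrix (Fin 2) (Fin 2) ℂ) = 0 := by
  set S : Set (Matrix (Fin 2) (Fin 2) ℂ) :=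
    {m | ∃ n : Γ, n ∈ N ∧ m = ((n : (Matrix (Fin 2) (Fin 2) ℂ)ˣ) : Matrix (Fin 2) (Fin 2) ℂ)}
    with hSdef
  obtain ⟨v, hv0, hveig⟩ := exists_common_eigvec S (by
    rintro M ⟨n, hn, rfl⟩ P ⟨m, hm, rfl⟩
    have h := congrArg
      (fun g : Γ => ((g : (Matrix (Fin 2) (Fin 2) ℂ)ˣ) : Matrix (Fin 2) (Fin 2) ℂ))
      (hcomm n hn m hm)
    simpa using h)
  have hveig' : ∀ n : Γ, n ∈ N → ∃ c : ℂ,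
      ((n : (Matrix (Fin 2) (Fin 2) ℂ)ˣ) : Matrix (Fin 2) (Fin 2) ℂ).mulVec v = c • v :=
    fun n hn => hveig _ ⟨n, hn, rfl⟩
  have hNtop : (N : Subgroup Γ) ≠ ⊤ := by
    intro h; rw [h, Subgroup.index_top] at hidx; omega
  obtain ⟨σ, hσ⟩ : ∃ σ : Γ, σ ∉ N := by
    by_contra hcon; push_neg at hcon
    exact hNtop ((Subgroup.eq_top_iff' N).mpr hcon)
  set w : Fin 2 → ℂ :=
    ((σ : (Matrix (Fin 2) (Fin 2) ℂ)ˣ) : Matrix (Fin 2) (Fin 2) ℂ).mulVec v with hwdef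
  have hmulVec : ∀ g h : Γ, ∀ u : Fin 2 → ℂ,
      (((g * h : Γ) : (Matrix (Fin 2) (Fin 2) ℂ)ˣ) : Matrix (Fin 2) (Fin 2) ℂ).mulVec u
      = ((g : (Matrix (Fin 2) (Fin 2) ℂ)ˣ) : Matrix (Fin 2) (Fin 2) ℂ).mulVec
        (((h : (Matrix (Fin 2) (Fin 2) ℂ)ˣ) : Matrix (Fin 2) (Fin 2) ℂ).mulVec u) := by
    intro g h u
    rw [Matrix.mulVec_mulVec]
    norm_cast
  have hNw : ∀ n : Γ, n ∈ N → ∃ c : ℂ,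
      ((n : (Matrix (Fin 2) (Fin 2) ℂ)ˣ) : Matrix (Fin 2) (Fin 2) ℂ).mulVec w = c • w := by
    intro n hn
    have hmem : σ⁻¹ * n * σ ∈ N := by
      have := hnorm.conj_mem n hn σ⁻¹
      simpa using this
    obtain ⟨c, hc⟩ := hveig' _ hmem
    refine ⟨c, ?_⟩
    have key : n * σ = σ * (σ⁻¹ * n * σ) := by group
    calc ((n : (Matrix (Fin 2) (Fin 2) ℂ)ˣ) : Matrix (Fin 2) (Fin 2) ℂ).mulVec w
        = (((n * σ : Γ) : (Matrix (Fin 2) (Fin 2) ℂ)ˣ) : Matrix (Fin 2) (Fin 2) ℂ).mulVec v := by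
          rw [hwdef, ← hmulVec]
      _ = (((σ * (σ⁻¹ * n * σ) : Γ) : (Matrix (Fin 2) (Fin 2) ℂ)ˣ)
            : Matrix (Fin 2) (Fin 2) ℂ).mulVec v := by rw [← key]
      _ = c • w := by
          rw [hmulVec, hc, Matrix.mulVec_smul, hwdef]
  have hout : ∀ g : Γ, g ∉ N →
      (∃ c : ℂ, ((g : (Matrix (Fin 2) (Fin 2) ℂ)ˣ) : Matrix (Fin 2) (Fin 2) ℂ).mulVec v = c • w)
      ∧ (∃ d : ℂ, ((g : (Matrix (Fin 2) (Fin 2) ℂ)ˣ) : Matrix (Fin 2) (Fin 2) ℂ).mulVec w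
          = d • v) := by
    intro g hg
    constructor
    · have hmem : g * σ⁻¹ ∈ N := by
        rw [Subgroup.mul_mem_iff_of_index_two hidx]
        simp [hg, hσ]
      obtain ⟨c, hc⟩ := hNw _ hmem
      refine ⟨c, ?_⟩
      have key : g = (g * σ⁻¹) * σ := by group
      calc ((g : (Matrix (Fin 2) (Fin 2) ℂ)ˣ) : Matrix (Fin 2) (Fin 2) ℂ).mulVec v
          = (((g * σ⁻¹) * σ : Γ) : (Matrix (Fin 2) (Fin 2) ℂ)ˣ).val.mulVec v := by rw [← key]
        _ = c • w := by rw [hmulVec, ← hwdef, hc]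
    · have hmem : g * σ ∈ N := by
        rw [Subgroup.mul_mem_iff_of_index_two hidx]
        simp [hg, hσ]
      obtain ⟨d, hd⟩ := hveig' _ hmem
      refine ⟨d, ?_⟩
      calc ((g : (Matrix (Fin 2) (Fin 2) ℂ)ˣ) : Matrix (Fin 2) (Fin 2) ℂ).mulVec w
          = (((g * σ : Γ) : (Matrix (Fin 2) (Fin 2) ℂ)ˣ)
              : Matrix (Fin 2) (Fin 2) ℂ).mulVec v := by rw [hwdef, ← hmulVec]
        _ = d • v := hd
  have hw : w ∉ Submodule.span ℂ {v} := by
    intro hmem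
    apply no_invariant_line Γ hirr v hv0
    intro γ hγ
    set g : Γ := ⟨γ, hγ⟩ with hgdef
    by_cases hgN : g ∈ N
    · obtain ⟨c, hc⟩ := hveig' g hgN
      rw [show (γ : Matrix (Fin 2) (Fin 2) ℂ)
          = ((g : (Matrix (Fin 2) (Fin 2) ℂ)ˣ) : Matrix (Fin 2) (Fin 2) ℂ) from rfl, hc]
      exact Submodule.smul_mem _ c (Submodule.mem_span_singleton_self v)
    · obtain ⟨⟨c, hc⟩, -⟩ := hout g hgN
      rw [show (γ : Matrix (Fin 2) (Fin 2) ℂ)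
          = ((g : (Matrix (Fin 2) (Fin 2) ℂ)ˣ) : Matrix (Fin 2) (Fin 2) ℂ) from rfl, hc]
      exact Submodule.smul_mem _ c hmem
  obtain ⟨hc, hd⟩ := hout τ hτ
  exact trace_eq_zero_of_swap _ v w (det_pair_ne_zero hv0 hw) hc hd

lemma comm_of_closure {G : Type*} [Group G] {S : Set G}
    (h : ∀ x ∈ S, ∀ y ∈ S, Commute x y) :
    ∀ p ∈ Subgroup.closure S, ∀ q ∈ Subgroup.closure S, Commute p q := by
  have h1 : ∀ x ∈ S, ∀ q ∈ Subgroup.closure S, Commute x q := by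
    intro x hx q hq
    induction hq using Subgroup.closure_induction with
    | mem y hy => exact h x hx y hy
    | one => exact Commute.one_right x
    | mul u v hu hv h1 h2 => exact h1.mul_right h2
    | inv u hu h1 => exact h1.inv_right
  intro p hp q hq
  induction hp using Subgroup.closure_induction with
  | mem y hy => exact h1 y hy q hq
  | one => exact Commute.one_left q
  | mul u v hu hv hc1 hc2 => exact hc1.mul_left hc2
  | inv u hu hc => exact hc.inv_left

lemma dihedral_core {G : Type*} [Group G] (s e z a b : G)
    (hs : s * s = 1) (hrel : s * e * s = z * e⁻¹)
    (hze : Commute z e) (hzs : Commute z s)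
    (ha : a ∈ Subgroup.closure {e, z} ∨ ∃ n ∈ Subgroup.closure {e, z}, a = s * n)
    (hb : b ∈ Subgroup.closure {e, z} ∨ ∃ n ∈ Subgroup.closure {e, z}, b = s * n)
    (hgen : ∀ g : G, g ∈ Subgroup.closure {a, b})
    (hnab : ¬ ∀ g h : G, g * h = h * g) :
    ∃ N : Subgroup G, N.Normal ∧ N.index = 2 ∧ ∀ p ∈ N, ∀ q ∈ N, p * q = q * p := by
  set N := Subgroup.closure ({e, z} : Set G) with hNdef
  have he : e ∈ N := Subgroup.subset_closure (by simp)
  have hz : z ∈ N := Subgroup.subset_closure (by simp)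
  have hNcomm : ∀ p ∈ N, ∀ q ∈ N, p * q = q * p := by
    intro p hp q hq
    refine comm_of_closure ?_ p hp q hq
    intro u hu v hv
    simp only [Set.mem_insert_iff, Set.mem_singleton_iff] at hu hv
    unfold Commute SemiconjBy
    rcases hu with h | h <;> rcases hv with h' | h' <;> rw [h, h'] <;>
      first
        | rfl
        | exact hze.eq.symm
        | exact hze.eq
  have hs' : s⁻¹ = s := inv_eq_of_mul_eq_one_right hs
  have hconj : ∀ n ∈ N, s * n * s⁻¹ ∈ N := by
    intro n hn
    induction hn using Subgroup.closure_induction with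
    | mem u hu =>
      simp only [Set.mem_insert_iff, Set.mem_singleton_iff] at hu
      rcases hu with h | h
      · rw [h, hs', hrel]; exact mul_mem hz (inv_mem he)
      · have hzz : s * z * s⁻¹ = z := by rw [← hzs.eq]; group
        rw [h, hzz]; exact hz
    | one => simpa using one_mem N
    | mul u v hu hv h1 h2 =>
      have huv : s * (u * v) * s⁻¹ = (s * u * s⁻¹) * (s * v * s⁻¹) := by group
      rw [huv]; exact mul_mem h1 h2
    | inv u hu h1 =>
      have hui : s * u⁻¹ * s⁻¹ = (s * u * s⁻¹)⁻¹ := by group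
      rw [hui]; exact inv_mem h1
  set K : Subgroup G :=
    { carrier := {g | g ∈ N ∨ ∃ n ∈ N, g = s * n}
      one_mem' := Or.inl (one_mem N)
      mul_mem' := by
        rintro p q (hp | ⟨n, hn, rfl⟩) (hq | ⟨m, hm, rfl⟩)
        · exact Or.inl (mul_mem hp hq)
        · refine Or.inr ⟨(s * p * s⁻¹) * m, mul_mem (hconj p hp) hm, ?_⟩
          rw [hs', show s * (s * p * s * m) = (s * s) * (p * (s * m)) by group, hs, one_mul]
        · exact Or.inr ⟨n * q, mul_mem hn hq, by group⟩
        · refine Or.inl ?_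
          have key : (s * n) * (s * m) = (s * n * s⁻¹) * m := by rw [hs']; group
          rw [key]; exact mul_mem (hconj n hn) hm
      inv_mem' := by
        rintro p (hp | ⟨n, hn, rfl⟩)
        · exact Or.inl (inv_mem hp)
        · refine Or.inr ⟨s * n⁻¹ * s⁻¹, hconj _ (inv_mem hn), ?_⟩
          rw [hs', show s * (s * n⁻¹ * s) = (s * s) * (n⁻¹ * s) by group, hs, one_mul,
            _root_.mul_inv_rev, hs'] } with hKdef
  have htopK : ∀ g : G, g ∈ K := by
    intro g
    refine (Subgroup.closure_le K).mpr ?_ (hgen g)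
    rintro u (rfl | hu)
    · exact ha
    · simp only [Set.mem_singleton_iff] at hu; subst hu; exact hb
  have hsN : s ∉ N := by
    intro hsn
    apply hnab
    intro g h
    have hmem : ∀ u : G, u ∈ N := by
      intro u
      rcases htopK u with hu | ⟨n, hn, rfl⟩
      · exact hu
      · exact mul_mem hsn hn
    exact hNcomm g (hmem g) h (hmem h)
  refine ⟨N, ?_, ?_, hNcomm⟩
  · constructor
    intro n hn g
    rcases htopK g with hg | ⟨m, hm, rfl⟩
    · exact mul_mem (mul_mem hg hn) (inv_mem hg)
    · have key : (s * m) * n * (s * m)⁻¹ = s * (m * n * m⁻¹) * s⁻¹ := by group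
      rw [key]
      exact hconj _ (mul_mem (mul_mem hm hn) (inv_mem hm))
  · rw [Subgroup.index_eq_two_iff]
    refine ⟨s, fun g => ?_⟩
    by_cases hg : g ∈ N
    · refine Or.inr ⟨hg, fun hgs => hsN ?_⟩
      have key : s = g⁻¹ * (g * s) := by group
      rw [key]; exact mul_mem (inv_mem hg) hgs
    · rcases htopK g with hg' | ⟨n, hn, rfl⟩
      · exact absurd hg' hg
      · refine Or.inl ⟨?_, hg⟩
        have key : (s * n) * s = s * n * s⁻¹ := by rw [hs']
        rw [key]; exact hconj n hn

lemma gen_lemma {G : Type*} [Group G] (S : Set G) (Γ : Subgroup G)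
    (hΓ : Γ = Subgroup.closure S) (a b : Γ) (hS : ∀ u ∈ S, u = (a : G) ∨ u = (b : G)) :
    ∀ g : Γ, g ∈ Subgroup.closure {a, b} := by
  subst hΓ
  intro g
  have h1 : g ∈ Subgroup.closure
      (Subtype.val ⁻¹' S : Set (Subgroup.closure S)) := by
    rw [Subgroup.closure_closure_coe_preimage]
    trivial
  refine (Subgroup.closure_le _).mpr ?_ h1
  intro u hu
  rcases hS u.1 hu with h | h
  · have : u = a := Subtype.ext h
    exact this ▸ Subgroup.subset_closure (Set.mem_insert _ _)
  · have : u = b := Subtype.ext h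
    exact this ▸ Subgroup.subset_closure (by simp)

lemma sq_scalar (M : Matrix (Fin 2) (Fin 2) ℂ) (h : M.trace = 0) :
    M * M = (M 0 0 * M 0 0 + M 0 1 * M 1 0) • (1 : Matrix (Fin 2) (Fin 2) ℂ) := by
  rw [Matrix.trace_fin_two] at h
  ext i j
  fin_cases i <;> fin_cases j <;>
    simp [Matrix.mul_apply, Fin.sum_univ_two, Matrix.one_apply] <;>
    first
      | linear_combination M 0 1 * h
      | linear_combination M 1 0 * h
      | linear_combination (M 1 1 - M 0 0) * h
      | ring

end Aux

theorem dihedral_iff_two_traces_zero (x : Fin 3 → ℂ)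
    (hroots : ∀ j, ∃ m : ℕ, 0 < m ∧ x j ^ m = 1)
    (Γ : Subgroup (Matrix (Fin 2) (Fin 2) ℂ)ˣ)
    (hΓ : Γ = Subgroup.closure {u : (Matrix (Fin 2) (Fin 2) ℂ)ˣ |
        (u : Matrix (Fin 2) (Fin 2) ℂ) = !![x 0 * x 1, 1 - x 0; 0, 1] ∨
        (u : Matrix (Fin 2) (Fin 2) ℂ) = !![1, 0; x 1 * (1 - x 2), x 1 * x 2]})
    (hfin : (Γ : Set (Matrix (Fin 2) (Fin 2) ℂ)ˣ).Finite)
    (hirr : ∀ W : Submodule ℂ (Fin 2 → ℂ),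
      (∀ γ ∈ Γ, ∀ w ∈ W, (γ : Matrix (Fin 2) (Fin 2) ℂ).mulVec w ∈ W) → W = ⊥ ∨ W = ⊤) :
    (∃ N : Subgroup Γ, N.Normal ∧ N.index = 2 ∧ ∀ a ∈ N, ∀ b ∈ N, a * b = b * a) ↔
    ((x 0 * x 1 = -1 ∧ x 1 * x 2 = -1) ∨ (x 1 * x 2 = -1 ∧ x 2 * x 0 = -1) ∨
     (x 0 * x 1 = -1 ∧ x 2 * x 0 = -1)) := by
  classical
  have hxne : ∀ j, x j ≠ 0 := by
    intro j hj
    obtain ⟨m, hm, hpow⟩ := hroots j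
    rw [hj, zero_pow hm.ne'] at hpow
    exact zero_ne_one hpow
  set Amat : Matrix (Fin 2) (Fin 2) ℂ := !![x 0 * x 1, 1 - x 0; 0, 1] with hAmatdef
  set Bmat : Matrix (Fin 2) (Fin 2) ℂ := !![1, 0; x 1 * (1 - x 2), x 1 * x 2] with hBmatdef
  have hAU : IsUnit Amat := by
    rw [Matrix.isUnit_iff_isUnit_det]
    have hd : Amat.det = x 0 * x 1 := by rw [hAmatdef, Matrix.det_fin_two_of]; ring
    rw [hd]
    exact isUnit_iff_ne_zero.mpr (mul_ne_zero (hxne 0) (hxne 1))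
  have hBU : IsUnit Bmat := by
    rw [Matrix.isUnit_iff_isUnit_det]
    have hd : Bmat.det = x 1 * x 2 := by rw [hBmatdef, Matrix.det_fin_two_of]; ring
    rw [hd]
    exact isUnit_iff_ne_zero.mpr (mul_ne_zero (hxne 1) (hxne 2))
  set uA := hAU.unit with huAdef
  set uB := hBU.unit with huBdef
  have huA : (uA : Matrix (Fin 2) (Fin 2) ℂ) = Amat := hAU.unit_spec
  have huB : (uB : Matrix (Fin 2) (Fin 2) ℂ) = Bmat := hBU.unit_spec
  have hmemA : uA ∈ Γ := by rw [hΓ]; exact Subgroup.subset_closure (Or.inl huA)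
  have hmemB : uB ∈ Γ := by rw [hΓ]; exact Subgroup.subset_closure (Or.inr huB)
  set a : Γ := ⟨uA, hmemA⟩ with hadef
  set b : Γ := ⟨uB, hmemB⟩ with hbdef
  have hva : ((a : (Matrix (Fin 2) (Fin 2) ℂ)ˣ) : Matrix (Fin 2) (Fin 2) ℂ) = Amat := huA
  have hvb : ((b : (Matrix (Fin 2) (Fin 2) ℂ)ˣ) : Matrix (Fin 2) (Fin 2) ℂ) = Bmat := huB
  have hvmul : ∀ g h : Γ,
      (((g * h : Γ) : (Matrix (Fin 2) (Fin 2) ℂ)ˣ) : Matrix (Fin 2) (Fin 2) ℂ)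
      = ((g : (Matrix (Fin 2) (Fin 2) ℂ)ˣ) : Matrix (Fin 2) (Fin 2) ℂ)
        * ((h : (Matrix (Fin 2) (Fin 2) ℂ)ˣ) : Matrix (Fin 2) (Fin 2) ℂ) := fun _ _ => rfl
  have hvone : (((1 : Γ) : (Matrix (Fin 2) (Fin 2) ℂ)ˣ) : Matrix (Fin 2) (Fin 2) ℂ) = 1 := rfl
  have ext_of_val : ∀ g h : Γ,
      ((g : (Matrix (Fin 2) (Fin 2) ℂ)ˣ) : Matrix (Fin 2) (Fin 2) ℂ)
        = ((h : (Matrix (Fin 2) (Fin 2) ℂ)ˣ) : Matrix (Fin 2) (Fin 2) ℂ) → g = h :=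
    fun g h hh => Subtype.ext (Units.ext hh)
  have hgen : ∀ g : Γ, g ∈ Subgroup.closure {a, b} := by
    refine gen_lemma _ Γ hΓ a b ?_
    rintro u (h | h)
    · exact Or.inl (Units.ext (by rw [h]; exact hva.symm))
    · exact Or.inr (Units.ext (by rw [h]; exact hvb.symm))
  have hnab : ¬ ∀ g h : Γ, g * h = h * g := not_all_commute Γ hirr
  have hvab : (((a * b : Γ) : (Matrix (Fin 2) (Fin 2) ℂ)ˣ) : Matrix (Fin 2) (Fin 2) ℂ)
      = Amat * Bmat := by rw [hvmul, hva, hvb]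
  constructor
  · rintro ⟨N, hnorm, hidx, hcomm⟩
    have hnotboth : ¬(a ∈ N ∧ b ∈ N) := by
      rintro ⟨haN, hbN⟩
      have hNtop : N = ⊤ := by
        rw [eq_top_iff]
        intro g _
        refine (Subgroup.closure_le N).mpr ?_ (hgen g)
        rintro u (rfl | hu)
        · exact haN
        · simp only [Set.mem_singleton_iff] at hu; subst hu; exact hbN
      rw [hNtop, Subgroup.index_top] at hidx
      omega
    have trA : a ∉ N → x 0 * x 1 = -1 := by
      intro h
      have htr := trace_zero_of_not_mem Γ hirr N hnorm hidx hcomm a h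
      rw [hva, hAmatdef, Matrix.trace_fin_two_of] at htr
      linear_combination htr
    have trB : b ∉ N → x 1 * x 2 = -1 := by
      intro h
      have htr := trace_zero_of_not_mem Γ hirr N hnorm hidx hcomm b h
      rw [hvb, hBmatdef, Matrix.trace_fin_two_of] at htr
      linear_combination htr
    have trAB : (a * b) ∉ N → x 2 * x 0 = -1 := by
      intro h
      have htr := trace_zero_of_not_mem Γ hirr N hnorm hidx hcomm (a * b) h
      rw [hvab, hAmatdef, hBmatdef] at htr
      have hfac : x 1 * (1 + x 0 * x 2) = 0 := by
        simp [Matrix.trace_fin_two, Matrix.mul_apply, Fin.sum_univ_two] at htr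
        linear_combination htr
      rcases mul_eq_zero.mp hfac with h1 | h2
      · exact absurd h1 (hxne 1)
      · linear_combination h2
    by_cases haN : a ∈ N <;> by_cases hbN : b ∈ N
    · exact absurd ⟨haN, hbN⟩ hnotboth
    · have habN : a * b ∉ N := by
        intro h
        apply hbN
        have key : b = a⁻¹ * (a * b) := by group
        rw [key]
        exact mul_mem (inv_mem haN) h
      exact Or.inr (Or.inl ⟨trB hbN, trAB habN⟩)
    · have habN : a * b ∉ N := by
        intro h
        apply haN
        have key : a = (a * b) * b⁻¹ := by group
        rw [key]
        exact mul_mem h (inv_mem hbN)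
      exact Or.inr (Or.inr ⟨trA haN, trAB habN⟩)
    · exact Or.inl ⟨trA haN, trB hbN⟩
  · -- converse direction
    have hA2 : ∀ _ : x 0 * x 1 = -1, a * a = 1 := by
      intro h1
      apply ext_of_val
      rw [hvmul, hva, hvone, hAmatdef]
      ext i j
      fin_cases i <;> fin_cases j <;>
        simp [Matrix.mul_apply, Fin.sum_univ_two, Matrix.one_apply] <;>
        first
          | linear_combination (x 0 * x 1 - 1) * h1
          | linear_combination (1 - x 0) * h1
    have hB2 : ∀ _ : x 1 * x 2 = -1, b * b = 1 := by
      intro h2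
      apply ext_of_val
      rw [hvmul, hvb, hvone, hBmatdef]
      ext i j
      fin_cases i <;> fin_cases j <;>
        simp [Matrix.mul_apply, Fin.sum_univ_two, Matrix.one_apply] <;>
        first
          | linear_combination (x 1 * x 2 - 1) * h2
          | linear_combination (x 1 * (1 - x 2)) * h2
          | linear_combination x 1 * h2
    have hABtr : ∀ _ : x 2 * x 0 = -1, (Amat * Bmat).trace = 0 := by
      intro h3
      rw [hAmatdef, hBmatdef]
      simp [Matrix.trace_fin_two, Matrix.mul_apply, Fin.sum_univ_two]
      linear_combination x 1 * h3
    have hζcomm : ∀ _ : x 2 * x 0 = -1, ∀ g : Γ, Commute ((a * b) * (a * b)) g := by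
      intro h3 g
      have hsq := sq_scalar _ (hABtr h3)
      unfold Commute SemiconjBy
      apply ext_of_val
      simp only [hvmul]
      rw [huA, huB, hsq, smul_mul_assoc, mul_smul_comm, one_mul, mul_one]
    rintro (⟨h1, h2⟩ | ⟨h2, h3⟩ | ⟨h1, h3⟩)
    · -- tr A = tr B = 0
      have ha2 := hA2 h1
      have hb2 := hB2 h2
      have hainv : a⁻¹ = a := inv_eq_of_mul_eq_one_right ha2
      have hbinv : b⁻¹ = b := inv_eq_of_mul_eq_one_right hb2
      refine dihedral_core a (a * b) 1 a b ha2 ?_ (Commute.one_left _) (Commute.one_left _)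
        ?_ ?_ hgen hnab
      · rw [one_mul, _root_.mul_inv_rev, hainv, hbinv,
          show a * (a * b) * a = (a * a) * (b * a) by group, ha2, one_mul]
      · exact Or.inr ⟨1, one_mem _, (mul_one a).symm⟩
      · refine Or.inr ⟨a * b, Subgroup.subset_closure (Set.mem_insert _ _), ?_⟩
        rw [show a * (a * b) = (a * a) * b by group, ha2, one_mul]
    · -- tr B = tr AB = 0
      have hb2 := hB2 h2
      have hζ := hζcomm h3
      have hR : ((a * b) * (a * b)) * (b * (a * b))⁻¹ = a := by group
      refine dihedral_core b (b * (a * b)) ((a * b) * (a * b)) a b hb2 ?_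
        (hζ _) (hζ _) ?_ ?_ hgen hnab
      · rw [hR, show b * (b * (a * b)) * b = (b * b) * (a * (b * b)) by group, hb2,
          one_mul, mul_one]
      · refine Or.inl ?_
        have hm : ((a * b) * (a * b)) * (b * (a * b))⁻¹ ∈
            Subgroup.closure ({b * (a * b), (a * b) * (a * b)} : Set Γ) :=
          mul_mem (Subgroup.subset_closure (by simp))
            (inv_mem (Subgroup.subset_closure (Set.mem_insert _ _)))
        rw [hR] at hm
        exact hm
      · exact Or.inr ⟨1, one_mem _, (mul_one b).symm⟩
    · -- tr A = tr AB = 0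
      have ha2 := hA2 h1
      have hζ := hζcomm h3
      refine dihedral_core a b ((a * b) * (a * b)) a b ha2 ?_ (hζ _) (hζ _) ?_ ?_ hgen hnab
      · group
      · exact Or.inr ⟨1, one_mem _, (mul_one a).symm⟩
      · exact Or.inl (Subgroup.subset_closure (Set.mem_insert _ _))
end

section
/- Let d ≥ 2 be an integer, E the d-th cyclotomic field over ℚ, 𝓞_E its ring of integers, and σ the automorphism of E determined by σ(ζ) = ζ⁻¹ for every d-th root of unity ζ in E. Let h be an n×n matrix with entries in E satisfying σ(h)ᵀ = −h. Assume that for every field embedding φ : E → ℂ, the complex matrix φ(h) obtained by applying φ entrywise is anisotropic. Then the group of all matrices g ∈ GL_n(E) with entries (of both g and g⁻¹) in 𝓞_E satisfying σ(g)ᵀ h g = h is finite. -/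
open Matrix

lemma aux_qform_smul {n : ℕ} (A : Matrix (Fin n) (Fin n) ℂ) (c : ℂ) (x : Fin n → ℂ) :
    star (c • x) ⬝ᵥ A.mulVec (c • x) = ((‖c‖ : ℂ) ^ 2) * (star x ⬝ᵥ A.mulVec x) := by
  rw [star_smul, smul_dotProduct, mulVec_smul, dotProduct_smul]
  simp only [smul_eq_mul, Complex.star_def]
  rw [← mul_assoc, Complex.conj_mul']

lemma aux_qform_inv {n : ℕ} (A G : Matrix (Fin n) (Fin n) ℂ)
    (hG : Gᴴ * A * G = A) (x : Fin n → ℂ) :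
    star (G.mulVec x) ⬝ᵥ A.mulVec (G.mulVec x) = star x ⬝ᵥ A.mulVec x := by
  rw [star_mulVec, mulVec_mulVec, ← dotProduct_mulVec, mulVec_mulVec, ← Matrix.mul_assoc, hG]

lemma aux_bound_of_posdef {n : ℕ} (A : Matrix (Fin n) (Fin n) ℂ)
    (hpos : ∀ x : Fin n → ℂ, x ≠ 0 → 0 < (star x ⬝ᵥ A.mulVec x).re) :
    ∃ C : ℝ, ∀ G : Matrix (Fin n) (Fin n) ℂ, Gᴴ * A * G = A → ∀ i j, ‖G i j‖ ≤ C := by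
  rcases Nat.eq_zero_or_pos n with rfl | hn
  · exact ⟨0, fun G _ i => i.elim0⟩
  set q : (Fin n → ℂ) → ℝ := fun x => (star x ⬝ᵥ A.mulVec x).re with hqdef
  have hcont : Continuous q := by
    simp only [hqdef, dotProduct, mulVec]
    fun_prop
  have hsphne : (Metric.sphere (0 : Fin n → ℂ) 1).Nonempty := by
    refine ⟨Pi.single ⟨0, hn⟩ 1, ?_⟩
    simp [Pi.norm_single]
  obtain ⟨a, haS, hmin'⟩ := (isCompact_sphere (0 : Fin n → ℂ) 1).exists_isMinOn hsphne
    hcont.continuousOn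
  obtain ⟨b, hbS, hmax'⟩ := (isCompact_sphere (0 : Fin n → ℂ) 1).exists_isMaxOn hsphne
    hcont.continuousOn
  have hmin : ∀ x ∈ Metric.sphere (0 : Fin n → ℂ) 1, q a ≤ q x := hmin'
  have hmax : ∀ x ∈ Metric.sphere (0 : Fin n → ℂ) 1, q x ≤ q b := hmax'
  set m := q a with hm
  set M := q b with hM
  have hne : ∀ x : Fin n → ℂ, x ∈ Metric.sphere (0 : Fin n → ℂ) 1 → x ≠ 0 := by
    intro x hx h0
    rw [mem_sphere_zero_iff_norm] at hx
    simp [h0] at hx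
  have hm0 : 0 < m := hpos a (hne a haS)
  -- scaling
  have hscale : ∀ (x : Fin n → ℂ), x ≠ 0 →
      m * ‖x‖ ^ 2 ≤ q x ∧ q x ≤ M * ‖x‖ ^ 2 := by
    intro x hx
    have hnx : ‖x‖ ≠ 0 := norm_ne_zero_iff.mpr hx
    set u : Fin n → ℂ := ((‖x‖ : ℂ))⁻¹ • x with hu
    have hcu : ((‖x‖ : ℂ)) ≠ 0 := by simpa using hnx
    have huS : u ∈ Metric.sphere (0 : Fin n → ℂ) 1 := by
      rw [mem_sphere_zero_iff_norm, hu, norm_smul]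
      simp [norm_inv, hnx]
    have hxu : x = (‖x‖ : ℂ) • u := by rw [hu, smul_inv_smul₀ hcu]
    have hquq : q x = ‖x‖ ^ 2 * q u := by
      conv_lhs => rw [hxu]
      simp only [hqdef]
      rw [aux_qform_smul]
      rw [Complex.norm_real, norm_norm, ← Complex.ofReal_pow,
        Complex.re_ofReal_mul]
    constructor
    · rw [hquq]
      have := hmin u huS
      nlinarith [sq_nonneg ‖x‖, hmin u huS]
    · rw [hquq]
      nlinarith [sq_nonneg ‖x‖, hmax u huS]
  refine ⟨Real.sqrt (M / m), ?_⟩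
  intro G hG i j
  set y : Fin n → ℂ := G.mulVec (Pi.single j (1:ℂ)) with hy
  have hqy : q y = q (Pi.single j 1) := by
    simp only [hqdef, hy]
    exact congrArg Complex.re (aux_qform_inv A G hG (Pi.single j (1:ℂ)))
  have hsingle : (Pi.single j (1:ℂ) : Fin n → ℂ) ≠ 0 := by
    intro h0
    have := congrFun h0 j
    simp at this
  have hnorm1 : ‖(Pi.single j (1:ℂ) : Fin n → ℂ)‖ = 1 := by simp [Pi.norm_single]
  have hM0 : 0 < M := lt_of_lt_of_le hm0 (hmin b hbS)
  have hyle : ‖y‖ ^ 2 ≤ M / m := by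
    rcases eq_or_ne y 0 with h0 | h0
    · rw [h0]
      simp
      positivity
    · have h1 := (hscale y h0).1
      have h2 := (hscale _ hsingle).2
      rw [hqy] at h1
      rw [hnorm1] at h2
      rw [le_div_iff₀ hm0]
      nlinarith
  have : ‖y‖ ≤ Real.sqrt (M / m) := by
    have := Real.sqrt_le_sqrt hyle
    rwa [Real.sqrt_sq (norm_nonneg y)] at this
  refine le_trans ?_ this
  have : y i = G i j := by
    rw [hy, mulVec_single]
    simp
  rw [← this]
  exact norm_le_pi_norm y i

lemma aux_bound_of_aniso {n : ℕ} (H : Matrix (Fin n) (Fin n) ℂ)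
    (hH : Hᴴ = -H)
    (ha : ∀ x : Fin n → ℂ, x ≠ 0 → star x ⬝ᵥ H.mulVec x ≠ 0) :
    ∃ C : ℝ, ∀ G : Matrix (Fin n) (Fin n) ℂ, Gᴴ * H * G = H → ∀ i j, ‖G i j‖ ≤ C := by
  rcases Nat.eq_zero_or_pos n with rfl | hn
  · exact ⟨0, fun G _ i => i.elim0⟩
  -- the form is purely imaginary
  have hre : ∀ x : Fin n → ℂ, (star x ⬝ᵥ H.mulVec x).re = 0 := by
    intro x
    have hconj : (starRingEnd ℂ) (star x ⬝ᵥ H.mulVec x) = -(star x ⬝ᵥ H.mulVec x) := by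
      calc (starRingEnd ℂ) (star x ⬝ᵥ H.mulVec x)
          = star (star x ⬝ᵥ H.mulVec x) := rfl
        _ = star (H.mulVec x) ⬝ᵥ x := by
              rw [← star_dotProduct_star, star_star]
        _ = (star x ᵥ* Hᴴ) ⬝ᵥ x := by rw [star_mulVec]
        _ = star x ⬝ᵥ (Hᴴ.mulVec x) := (dotProduct_mulVec _ _ _).symm
        _ = -(star x ⬝ᵥ H.mulVec x) := by rw [hH, neg_mulVec, dotProduct_neg]
    have := congrArg Complex.re hconj
    simp only [Complex.conj_re, Complex.neg_re] at this
    linarith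
  -- either I • H or (-I) • H is positive definite
  have himq : ∀ (ε : ℂ) (x : Fin n → ℂ),
      (star x ⬝ᵥ (ε • H).mulVec x).re = (ε * (star x ⬝ᵥ H.mulVec x)).re := by
    intro ε x
    rw [smul_mulVec, dotProduct_smul, smul_eq_mul]
  have hq0 : ∀ (ε : ℂ), (ε = Complex.I ∨ ε = -Complex.I) → ∀ x : Fin n → ℂ, x ≠ 0 →
      (star x ⬝ᵥ (ε • H).mulVec x).re ≠ 0 := by
    intro ε hε x hx
    rw [himq]
    have h1 := hre x
    have h2 := ha x hx
    have h3 : (star x ⬝ᵥ H.mulVec x).im ≠ 0 := by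
      intro h0
      exact h2 (Complex.ext h1 h0)
    rcases hε with rfl | rfl <;> simp [Complex.mul_re, h1, h3]
  -- connectedness of the complement of 0
  have hconn : IsConnected ({(0 : Fin n → ℂ)}ᶜ) := by
    apply isConnected_compl_singleton_of_one_lt_rank
    rw [rank_fun]
    have h2 : Module.rank ℝ ℂ = 2 := Complex.rank_real_complex
    rw [h2]
    simp only [Fintype.card_fin]
    have h1 : (1:ℕ) < n * 2 := by omega
    exact_mod_cast h1
  set x0 : Fin n → ℂ := Pi.single ⟨0, hn⟩ 1 with hx0def
  have hx0 : x0 ≠ 0 := by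
    intro h0
    have := congrFun h0 ⟨0, hn⟩
    simp [hx0def] at this
  have hcont : ∀ ε : ℂ, Continuous (fun x : Fin n → ℂ => (star x ⬝ᵥ (ε • H).mulVec x).re) := by
    intro ε
    simp only [dotProduct, mulVec]
    fun_prop
  have main : ∀ ε : ℂ, (ε = Complex.I ∨ ε = -Complex.I) →
      0 < (star x0 ⬝ᵥ (ε • H).mulVec x0).re →
      ∀ y : Fin n → ℂ, y ≠ 0 → 0 < (star y ⬝ᵥ (ε • H).mulVec y).re := by
    intro ε hε hεx0 y hy
    by_contra hle
    have hyneg : (star y ⬝ᵥ (ε • H).mulVec y).re < 0 :=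
      lt_of_le_of_ne (not_lt.mp hle) (hq0 _ hε y hy)
    have hIV := hconn.isPreconnected.intermediate_value (a := y) (b := x0)
      (by simpa using hy) (by simpa using hx0) ((hcont ε).continuousOn)
    have h0mem : (0:ℝ) ∈ Set.Icc ((star y ⬝ᵥ (ε • H).mulVec y).re)
        ((star x0 ⬝ᵥ (ε • H).mulVec x0).re) := ⟨le_of_lt hyneg, le_of_lt hεx0⟩
    obtain ⟨z, hz, hz0⟩ := hIV h0mem
    exact hq0 _ hε z (by simpa using hz) hz0
  have hnegrel : ∀ x : Fin n → ℂ, (star x ⬝ᵥ ((-Complex.I) • H).mulVec x).re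
      = -(star x ⬝ᵥ (Complex.I • H).mulVec x).re := by
    intro x
    rw [himq, himq, neg_mul, Complex.neg_re]
  obtain ⟨ε, hεI, hεpos⟩ : ∃ ε : ℂ, (ε = Complex.I ∨ ε = -Complex.I) ∧
      ∀ x : Fin n → ℂ, x ≠ 0 → 0 < (star x ⬝ᵥ (ε • H).mulVec x).re := by
    rcases lt_trichotomy ((star x0 ⬝ᵥ (Complex.I • H).mulVec x0).re) 0 with hlt | heq | hgt
    · refine ⟨-Complex.I, Or.inr rfl, main _ (Or.inr rfl) ?_⟩
      rw [hnegrel]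
      linarith
    · exact absurd heq (hq0 _ (Or.inl rfl) x0 hx0)
    · exact ⟨Complex.I, Or.inl rfl, main _ (Or.inl rfl) hgt⟩
  obtain ⟨C, hC⟩ := aux_bound_of_posdef (ε • H) hεpos
  refine ⟨C, fun G hG i j => hC G ?_ i j⟩
  rw [Matrix.mul_smul, Matrix.smul_mul, hG]

lemma aux_conj_comm (d : ℕ+) (hd : 2 ≤ (d : ℕ))
    (σ : CyclotomicField d ℚ →+* CyclotomicField d ℚ)
    (hσ : ∀ ζ : CyclotomicField d ℚ, ζ ^ (d : ℕ) = 1 → σ ζ = ζ⁻¹)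
    (φ : CyclotomicField d ℚ →+* ℂ) (a : CyclotomicField d ℚ) :
    φ (σ a) = (starRingEnd ℂ) (φ a) := by
  letI := CyclotomicField.algebra (d : ℕ) ℚ
  have hmem := IsCyclotomicExtension.adjoin_roots (S := {(d : ℕ)}) (A := ℚ)
    (B := CyclotomicField d ℚ) a
  refine Algebra.adjoin_induction
    (p := fun x _ => φ (σ x) = (starRingEnd ℂ) (φ x)) ?_ ?_ ?_ ?_ hmem
  · rintro ζ ⟨m, hm, -, hζ⟩
    rw [Set.mem_singleton_iff] at hm
    rw [hm] at hζ
    rw [hσ ζ hζ, map_inv₀]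
    have hz : (φ ζ) ^ (d : ℕ) = 1 := by rw [← map_pow, hζ, _root_.map_one]
    have hd0 : (d : ℕ) ≠ 0 := by omega
    have hz0 : φ ζ ≠ 0 := by
      intro h0
      rw [h0, zero_pow hd0] at hz
      exact zero_ne_one hz
    have hnsq : Complex.normSq (φ ζ) = 1 := by
      have h1 : Complex.normSq (φ ζ) ^ (d : ℕ) = 1 := by
        rw [← map_pow, hz, _root_.map_one]
      have h2 : (0:ℝ) ≤ Complex.normSq (φ ζ) := Complex.normSq_nonneg _
      have := (pow_left_inj₀ h2 zero_le_one hd0).mp (by rw [h1, one_pow])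
      exact this
    rw [Complex.inv_def, hnsq]
    simp [Complex.star_def]
  · intro r
    simp only [eq_ratCast, map_ratCast]
  · intro x y _ _ hx hy
    simp only [map_add, hx, hy]
  · intro x y _ _ hx hy
    simp only [_root_.map_mul, hx, hy]

theorem unitary_group_of_totally_anisotropic_finite (d : ℕ+) (hd : 2 ≤ (d : ℕ)) (n : ℕ)
    (σ : CyclotomicField d ℚ →+* CyclotomicField d ℚ)
    (hσ : ∀ ζ : CyclotomicField d ℚ, ζ ^ (d : ℕ) = 1 → σ ζ = ζ⁻¹)
    (h : Matrix (Fin n) (Fin n) (CyclotomicField d ℚ))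
    (hskew : (h.map (fun a => σ a))ᵀ = -h)
    (haniso : ∀ φ : CyclotomicField d ℚ →+* ℂ,
      ∀ x : Fin n → ℂ, x ≠ 0 →
        dotProduct (star x) ((h.map (fun a => φ a)).mulVec x) ≠ 0) :
    {g : Matrix (Fin n) (Fin n) (CyclotomicField d ℚ) |
      IsUnit g ∧ (∀ i j, IsIntegral ℤ (g i j)) ∧ (∀ i j, IsIntegral ℤ (g⁻¹ i j)) ∧
      (g.map (fun a => σ a))ᵀ * h * g = h}.Finite := by
  haveI : NumberField (CyclotomicField d ℚ) :=
    inferInstance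
  -- transpose/conjugate compatibility
  have hmapσ : ∀ (φ : CyclotomicField d ℚ →+* ℂ) (M : Matrix (Fin n) (Fin n) (CyclotomicField d ℚ)),
      ((M.map fun a => σ a)ᵀ).map (fun a => φ a) = (M.map fun a => φ a)ᴴ := by
    intro φ M
    ext i j
    simp [Matrix.map_apply, conjTranspose_apply, aux_conj_comm d hd σ hσ φ]
  -- skew-hermitian at every embedding
  have hherm : ∀ φ : CyclotomicField d ℚ →+* ℂ, (h.map fun a => φ a)ᴴ = -(h.map fun a => φ a) := by
    intro φ
    rw [← hmapσ φ h, hskew]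
    ext i j
    simp [Matrix.map_apply]
  -- the unitary relation at every embedding
  have hrel : ∀ (φ : CyclotomicField d ℚ →+* ℂ) (g : Matrix (Fin n) (Fin n) (CyclotomicField d ℚ)),
      (g.map (fun a => σ a))ᵀ * h * g = h →
      (g.map fun a => φ a)ᴴ * (h.map fun a => φ a) * (g.map fun a => φ a)
        = h.map fun a => φ a := by
    intro φ g hg
    rw [← hmapσ φ g]
    rw [← Matrix.map_mul (f := φ), ← Matrix.map_mul (f := φ), hg]
  -- choose bounds
  choose C hC using fun φ : CyclotomicField d ℚ →+* ℂ =>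
    aux_bound_of_aniso (h.map fun a => φ a) (hherm φ) (haniso φ)
  set B : ℝ := ∑ φ : CyclotomicField d ℚ →+* ℂ, max (C φ) 0 with hB
  have hCB : ∀ φ : CyclotomicField d ℚ →+* ℂ, C φ ≤ B := by
    intro φ
    have h1 : max (C φ) 0 ≤ B := Finset.single_le_sum (f := fun ψ => max (C ψ) 0)
      (fun ψ _ => le_max_right _ _) (Finset.mem_univ φ)
    exact le_trans (le_max_left _ _) h1
  -- the finite set of possible entries
  have hTfin : {x : CyclotomicField d ℚ | IsIntegral ℤ x ∧ ∀ φ : CyclotomicField d ℚ →+* ℂ, ‖φ x‖ ≤ B}.Finite :=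
    NumberField.Embeddings.finite_of_norm_le (CyclotomicField d ℚ) ℂ B
  -- matrices with entries in a finite set form a finite set
  apply Set.Finite.subset
    ((Set.Finite.pi (fun _ : Fin n => Set.Finite.pi (fun _ : Fin n => hTfin))))
  rintro g ⟨-, hint, -, hg⟩
  refine fun i _ j _ => ⟨hint i j, fun φ => ?_⟩
  have := hC φ (Matrix.map g fun a => φ a) (hrel φ g hg) i j
  exact le_trans this (hCB φ)
end

section
/- Let n ≥ 1 and let K = ℚ(X_1, …, X_{n+1}) be the field of rational functions in n+1 variables over ℚ. Define the n×n tridiagonal matrix h over K by h_{ii} = (1 − X_i X_{i+1}) / ((1 − X_i)(1 − X_{i+1})) for 1 ≤ i ≤ n, h_{i,i+1} = −1/(1 − X_{i+1}) for 1 ≤ i ≤ n−1, h_{i+1,i} = X_{i+1}/(X_{i+1} − 1) for 1 ≤ i ≤ n−1, and h_{ij} = 0 when |i − j| ≥ 2. Then det h = (1 − X_1 X_2 ⋯ X_{n+1}) / ((1 − X_1)(1 − X_2) ⋯ (1 − X_{n+1})). In particular, for every 1 ≤ j ≤ n, the j-th leading principal minor of h equals (1 − X_1 ⋯ X_{j+1})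 / ((1 − X_1) ⋯ (1 − X_{j+1})). -/
/-!
Expanding the determinant along the last row, and the one surviving off-diagonal minor along its
last column, gives for every matrix whose last row and column vanish off the last two positions the
three-term recurrence `D (m + 2) = h₁₁ D (m + 1) - h₀₁ h₁₀ D m` between leading principal minors.
The leading principal submatrices of `h` are again matrices `h`, built from the first variables, so
the closed form follows by a two-step induction whose step is an identity of rational functions.
-/

open Matrix

/-- The tridiagonal matrix `h` attached to the variables `x 0, …, x n`. -/
noncomputable def gassnerMatrix {n : ℕ} (K : Type*) [Field K] (x : Fin (n + 1) → K) :
    Matrix (Fin n) (Fin n) K :=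
  Matrix.of fun i j =>
    if i = j then
      (1 - x i.castSucc * x i.succ) / ((1 - x i.castSucc) * (1 - x i.succ))
    else if (j : ℕ) = (i : ℕ) + 1 then
      -1 / (1 - x j.castSucc)
    else if (i : ℕ) = (j : ℕ) + 1 then
      x i.castSucc / (x i.castSucc - 1)
    else 0

theorem Matrix.det_succ_succ_of_tridiagonal_last {R : Type*} [CommRing R] {m : ℕ}
    (M : Matrix (Fin (m + 2)) (Fin (m + 2)) R)
    (hrow : ∀ j : Fin m, M (Fin.last _) j.castSucc.castSucc = 0)
    (hcol : ∀ i : Fin m, M i.castSucc.castSucc (Fin.last _) = 0) :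
    M.det = M (Fin.last _) (Fin.last _) * (M.submatrix Fin.castSucc Fin.castSucc).det -
      M (Fin.last m).castSucc (Fin.last _) * M (Fin.last _) (Fin.last m).castSucc *
        ((M.submatrix Fin.castSucc Fin.castSucc).submatrix Fin.castSucc Fin.castSucc).det := by
  have hminor : (M.submatrix Fin.castSucc (Fin.last m).castSucc.succAbove).det =
      M (Fin.last m).castSucc (Fin.last _) *
        ((M.submatrix Fin.castSucc Fin.castSucc).submatrix Fin.castSucc Fin.castSucc).det := by
    rw [det_succ_column _ (Fin.last m), Fin.sum_univ_castSucc,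
      Finset.sum_eq_zero (fun i _ => by simp [hcol])]
    have hsub : (M.submatrix Fin.castSucc (Fin.last m).castSucc.succAbove).submatrix
        Fin.castSucc Fin.castSucc =
        (M.submatrix Fin.castSucc Fin.castSucc).submatrix Fin.castSucc Fin.castSucc := by
      ext i j
      simp [Fin.succAbove_castSucc_of_lt _ _ (Fin.castSucc_lt_last j)]
    simp [hsub, Even.neg_one_pow ⟨m, rfl⟩]
  rw [det_succ_row _ (Fin.last _), Fin.sum_univ_castSucc, Fin.sum_univ_castSucc,
    Finset.sum_eq_zero (fun j _ => by simp [hrow])]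
  have hodd : (-1 : R) ^ (m + 1 + m) = -1 := Odd.neg_one_pow ⟨m, by ring⟩
  have heven : (-1 : R) ^ (m + 1 + (m + 1)) = 1 := Even.neg_one_pow ⟨m + 1, rfl⟩
  simp only [Fin.val_last, Fin.val_castSucc, Fin.succAbove_last, hminor, hodd, heven, zero_add]
  ring

section Gassner

variable {K : Type*} [Field K]

theorem gassnerMatrix_apply_self {n : ℕ} (x : Fin (n + 1) → K) (i : Fin n) :
    gassnerMatrix K x i i =
      (1 - x i.castSucc * x i.succ) / ((1 - x i.castSucc) * (1 - x i.succ)) :=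
  if_pos rfl

theorem gassnerMatrix_apply_castSucc_succ {n : ℕ} (x : Fin (n + 2) → K) (i : Fin n) :
    gassnerMatrix K x i.castSucc i.succ = -1 / (1 - x i.succ.castSucc) := by
  simp [gassnerMatrix, Fin.ext_iff]

theorem gassnerMatrix_apply_succ_castSucc {n : ℕ} (x : Fin (n + 2) → K) (i : Fin n) :
    gassnerMatrix K x i.succ i.castSucc = x i.succ.castSucc / (x i.succ.castSucc - 1) := by
  rw [gassnerMatrix, of_apply, if_neg (by simp [Fin.ext_iff]), if_neg (by simp; omega),
    if_pos (by simp)]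

theorem gassnerMatrix_apply_eq_zero {n : ℕ} (x : Fin (n + 1) → K) {i j : Fin n}
    (h : (i : ℕ) + 2 ≤ j ∨ (j : ℕ) + 2 ≤ i) : gassnerMatrix K x i j = 0 := by
  simp only [gassnerMatrix, of_apply, Fin.ext_iff]
  rw [if_neg (by omega), if_neg (by omega), if_neg (by omega)]

theorem gassnerMatrix_submatrix_castLE {m n : ℕ} (x : Fin (n + 1) → K) (h : m ≤ n) :
    (gassnerMatrix K x).submatrix (Fin.castLE h) (Fin.castLE h) =
      gassnerMatrix K (x ∘ Fin.castLE (Nat.succ_le_succ h)) := by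
  ext i j
  simp only [gassnerMatrix, submatrix_apply, of_apply, Fin.val_castLE,
    (Fin.castLE_injective h).eq_iff]
  rfl

theorem gassnerMatrix_submatrix_castSucc {n : ℕ} (x : Fin (n + 2) → K) :
    (gassnerMatrix K x).submatrix Fin.castSucc Fin.castSucc =
      gassnerMatrix K (x ∘ Fin.castSucc) :=
  gassnerMatrix_submatrix_castLE x n.le_succ

theorem det_gassnerMatrix_eq {n : ℕ} (x : Fin (n + 1) → K) (hx : ∀ i, x i ≠ 1) :
    (gassnerMatrix K x).det = (1 - ∏ i, x i) / ∏ i, (1 - x i) := by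
  induction n using Nat.twoStepInduction with
  | zero => simp [sub_ne_zero.2 (hx 0).symm]
  | one => simp [gassnerMatrix, Fin.prod_univ_two]
  | more n ih₀ ih₁ =>
    have hup := gassnerMatrix_apply_castSucc_succ x (Fin.last n)
    have hlow := gassnerMatrix_apply_succ_castSucc x (Fin.last n)
    rw [Fin.succ_last] at hup hlow
    rw [det_succ_succ_of_tridiagonal_last, gassnerMatrix_submatrix_castSucc,
      gassnerMatrix_submatrix_castSucc, ih₁ (x ∘ Fin.castSucc) (fun i => hx _),
      ih₀ ((x ∘ Fin.castSucc) ∘ Fin.castSucc) (fun i => hx _),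
      gassnerMatrix_apply_self, hup, hlow]
    · have hx' : ∀ i, 1 - x i ≠ 0 := fun i => sub_ne_zero.2 (hx i).symm
      have hprod : ∏ i : Fin n, (1 - x i.castSucc.castSucc.castSucc) ≠ 0 :=
        Finset.prod_ne_zero_iff.2 fun i _ => hx' _
      have ha := hx' (Fin.last n).castSucc.castSucc
      have hb := hx' (Fin.last (n + 1)).castSucc
      have hb' : x (Fin.last (n + 1)).castSucc - 1 ≠ 0 := sub_ne_zero.2 (hx _)
      have hc := hx' (Fin.last (n + 2))
      simp only [Fin.prod_univ_castSucc, Function.comp_apply, Fin.succ_last]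
      field_simp
      ring
    · exact fun j => gassnerMatrix_apply_eq_zero x (by simp)
    · exact fun i => gassnerMatrix_apply_eq_zero x (by simp)

end Gassner

theorem MvPolynomial.X_ne_one {σ R : Type*} [CommSemiring R] [Nontrivial R] (i : σ) :
    (X i : MvPolynomial σ R) ≠ 1 := fun h => by
  simpa using congrArg constantCoeff h

set_option maxHeartbeats 1000000

theorem det_gassnerMatrix (n : ℕ) :
    (gassnerMatrix (FractionRing (MvPolynomial (Fin (n + 1)) ℚ))
        (fun i => algebraMap (MvPolynomial (Fin (n + 1)) ℚ)
          (FractionRing (MvPolynomial (Fin (n + 1)) ℚ)) (MvPolynomial.X i))).det =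
      (1 - ∏ i, algebraMap (MvPolynomial (Fin (n + 1)) ℚ)
          (FractionRing (MvPolynomial (Fin (n + 1)) ℚ)) (MvPolynomial.X i)) /
      (∏ i, (1 - algebraMap (MvPolynomial (Fin (n + 1)) ℚ)
          (FractionRing (MvPolynomial (Fin (n + 1)) ℚ)) (MvPolynomial.X i))) ∧
    ∀ j (hj1 : 1 ≤ j) (hj2 : j ≤ n),
      ((gassnerMatrix (FractionRing (MvPolynomial (Fin (n + 1)) ℚ))
          (fun i => algebraMap (MvPolynomial (Fin (n + 1)) ℚ)
            (FractionRing (MvPolynomial (Fin (n + 1)) ℚ)) (MvPolynomial.X i))).submatrix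
          (Fin.castLE hj2) (Fin.castLE hj2)).det =
        (1 - ∏ i : Fin (j + 1), algebraMap (MvPolynomial (Fin (n + 1)) ℚ)
            (FractionRing (MvPolynomial (Fin (n + 1)) ℚ))
            (MvPolynomial.X (Fin.castLE (by omega) i))) /
        (∏ i : Fin (j + 1), (1 - algebraMap (MvPolynomial (Fin (n + 1)) ℚ)
            (FractionRing (MvPolynomial (Fin (n + 1)) ℚ))
            (MvPolynomial.X (Fin.castLE (by omega) i)))) := by
  have hx (i : Fin (n + 1)) : algebraMap (MvPolynomial (Fin (n + 1)) ℚ)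
      (FractionRing (MvPolynomial (Fin (n + 1)) ℚ)) (MvPolynomial.X i) ≠ 1 :=
    (map_ne_one_iff _ (IsFractionRing.injective _ _)).2 (MvPolynomial.X_ne_one i)
  refine ⟨det_gassnerMatrix_eq _ hx, fun j _ hj => ?_⟩
  rw [gassnerMatrix_submatrix_castLE]
  exact det_gassnerMatrix_eq _ fun i => hx _
end

section
/- Let d ≥ 2 and n ≥ 2 be integers and k_1, …, k_{n+1} integers with 1 ≤ k_i ≤ d−1 and gcd(d, k_1, …, k_{n+1}) = 1. For an integer s coprime to d define ν_j(s) = {(k_1 + ⋯ + k_j)s/d} and μ_i(s) = {k_i s/d}, where {x} is the fractional part. Then the following are equivalent: (a) condition (*): for every integer s coprime to d and every j with 1 ≤ j ≤ n−1, the integer ⌊ν_j(s) + μ_{j+1}(s) + μ_{j+2}(s)⌋ is even; (b) condition (SS): for every integer s coprime to d, either ∑_{i=1}^{n+1} {k_i s/d} < 1 or ∑_{i=1}^{n+1} {−k_i s/d} < 1. -/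
/-!
Put `x_i = k_{i+1} s / d` and let `c_j = ⌊ν_j + fract x_j⌋ ∈ {0, 1}` be the carry when `fract x_j` is
added to `ν_j = fract (x_0 + ⋯ + x_{j-1})`. The floor in (*) is `c_j + c_{j+1}`, so (*) says
`c_1 = ⋯ = c_n`, while `S(s) = ∑ fract x_i = ν_{n+1} + c_1 + ⋯ + c_n`. Hence (*) at `s` puts `S(s)` in
`[0, 1) ∪ [n, n + 1)`. No `x_i` is an integer, so `S(s) + S(-s) = n + 1`, and for `n ≥ 2` this leaves
only `S(s) < 1` or `S(-s) < 1`. Conversely, `S(s) < 1` forces every carry to be `0`, and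
`S(-s) < 1`, i.e. `S(s) > n`, forces every carry to be `1`.
-/

open Int hiding range
open Finset

section FractSum

variable {R : Type*} [CommRing R] [LinearOrder R] [IsStrictOrderedRing R] [FloorRing R]

theorem fract_add_eq_fract_add_fract_sub_floor (a b : R) :
    fract (a + b) = fract a + fract b - ⌊fract a + fract b⌋ := by
  have h : a + b = ((⌊a⌋ + ⌊b⌋ : ℤ) : R) + (fract a + fract b) := by
    push_cast [fract]; ring
  rw [h, fract_intCast_add, fract]

def carry (x : ℕ → R) (j : ℕ) : ℤ :=
  ⌊fract (∑ i ∈ range j, x i) + fract (x j)⌋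

variable (x : ℕ → R) {n : ℕ}

theorem fract_sum_range_succ (j : ℕ) :
    fract (∑ i ∈ range (j + 1), x i) = fract (∑ i ∈ range j, x i) + fract (x j) - carry x j := by
  rw [sum_range_succ, fract_add_eq_fract_add_fract_sub_floor, carry]

theorem carry_nonneg (j : ℕ) : 0 ≤ carry x j :=
  floor_nonneg.mpr (add_nonneg (fract_nonneg _) (fract_nonneg _))

theorem carry_le_one (j : ℕ) : carry x j ≤ 1 := by
  have : fract (∑ i ∈ range j, x i) + fract (x j) < 1 + 1 :=
    add_lt_add (fract_lt_one _) (fract_lt_one _)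
  exact le_of_lt_add_one (floor_lt.mpr (by exact_mod_cast this))

theorem carry_zero : carry x 0 = 0 := by
  simp [carry, floor_fract]

theorem floor_fract_sum_add_fract_add_fract (j : ℕ) :
    ⌊fract (∑ i ∈ range j, x i) + fract (x j) + fract (x (j + 1))⌋ = carry x j + carry x (j + 1) := by
  have h : fract (∑ i ∈ range j, x i) + fract (x j) + fract (x (j + 1)) =
      (carry x j : R) + (fract (∑ i ∈ range (j + 1), x i) + fract (x (j + 1))) := by
    rw [fract_sum_range_succ]; ring
  rw [h, floor_intCast_add]
  rfl

theorem sum_fract_eq_fract_sum_add_sum_carry (m : ℕ) :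
    ∑ i ∈ range m, fract (x i) = fract (∑ i ∈ range m, x i) + ∑ j ∈ range m, (carry x j : R) := by
  induction m with
  | zero => simp
  | succ m ih =>
    rw [sum_range_succ, ih, fract_sum_range_succ, sum_range_succ (fun j => (carry x j : R))]
    ring

theorem sum_fract_eq_fract_sum_add_sum_carry_succ (n : ℕ) :
    ∑ i ∈ range (n + 1), fract (x i) =
      fract (∑ i ∈ range (n + 1), x i) + ∑ t ∈ range n, (carry x (t + 1) : R) := by
  rw [sum_fract_eq_fract_sum_add_sum_carry, sum_range_succ' (fun j => (carry x j : R)), carry_zero,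
    cast_zero, add_zero]

/-- Condition (*) for a sequence indexed from `0`: `x i` stands for `k_{i+1} s / d`. -/
def CondStar (x : ℕ → R) (n : ℕ) : Prop :=
  ∀ j, 1 ≤ j → j ≤ n - 1 → Even ⌊fract (∑ i ∈ range j, x i) + fract (x j) + fract (x (j + 1))⌋

theorem CondStar.carry_eq_carry_one {x : ℕ → R} (h : CondStar x n) :
    ∀ j, 1 ≤ j → j ≤ n → carry x j = carry x 1 := by
  intro j hj hjn
  induction j, hj using Nat.le_induction with
  | base => rfl
  | succ j hj ih =>
    have heven := h j hj (by omega)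
    rw [floor_fract_sum_add_fract_add_fract, Int.even_iff] at heven
    have := carry_nonneg x j
    have := carry_le_one x j
    have := carry_nonneg x (j + 1)
    have := carry_le_one x (j + 1)
    omega

theorem CondStar.sum_fract_lt_one_or_le {x : ℕ → R} (h : CondStar x n) :
    ∑ i ∈ range (n + 1), fract (x i) < 1 ∨ (n : R) ≤ ∑ i ∈ range (n + 1), fract (x i) := by
  have hsum : ∑ i ∈ range (n + 1), fract (x i) =
      fract (∑ i ∈ range (n + 1), x i) + n * carry x 1 := by
    have hconst : ∀ t ∈ range n, (carry x (t + 1) : R) = carry x 1 := fun t ht => by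
      rw [h.carry_eq_carry_one (t + 1) (by omega) (by rw [mem_range] at ht; omega)]
    rw [sum_fract_eq_fract_sum_add_sum_carry_succ, sum_congr rfl hconst, sum_const, card_range,
      nsmul_eq_mul]
  have := fract_nonneg (∑ i ∈ range (n + 1), x i)
  have := fract_lt_one (∑ i ∈ range (n + 1), x i)
  have : carry x 1 = 0 ∨ carry x 1 = 1 := by
    have := carry_nonneg x 1
    have := carry_le_one x 1
    omega
  rcases this with hc | hc
  · left
    simp only [hsum, hc, cast_zero, mul_zero, add_zero]
    linarith
  · right
    simp only [hsum, hc, cast_one, mul_one]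
    linarith

theorem carry_succ_eq_zero_of_sum_fract_lt_one (h : ∑ i ∈ range (n + 1), fract (x i) < 1) :
    ∀ t < n, carry x (t + 1) = 0 := by
  have hlt : ∑ t ∈ range n, carry x (t + 1) < 1 := by
    have := sum_fract_eq_fract_sum_add_sum_carry_succ x n
    have := fract_nonneg (∑ i ∈ range (n + 1), x i)
    have : ((∑ t ∈ range n, carry x (t + 1) : ℤ) : R) < 1 := by push_cast; linarith
    exact_mod_cast this
  intro t ht
  have := single_le_sum (fun t _ => carry_nonneg x (t + 1)) (mem_range.mpr ht)
  have := carry_nonneg x (t + 1)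
  omega

theorem carry_succ_eq_one_of_lt_sum_fract (h : (n : R) < ∑ i ∈ range (n + 1), fract (x i)) :
    ∀ t < n, carry x (t + 1) = 1 := by
  have hlt : ∑ t ∈ range n, (1 - carry x (t + 1)) < 1 := by
    have := sum_fract_eq_fract_sum_add_sum_carry_succ x n
    have := fract_lt_one (∑ i ∈ range (n + 1), x i)
    have : ((∑ t ∈ range n, (1 - carry x (t + 1)) : ℤ) : R) < 1 := by
      push_cast
      rw [sum_sub_distrib, sum_const, card_range, nsmul_one]
      linarith
    exact_mod_cast this
  intro t ht
  have := single_le_sum (fun t _ => sub_nonneg.mpr (carry_le_one x (t + 1))) (mem_range.mpr ht)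
  have := carry_le_one x (t + 1)
  omega

theorem condStar_of_carry_succ_eq (c : ℤ) (h : ∀ t < n, carry x (t + 1) = c) : CondStar x n := by
  intro j hj hjn
  obtain ⟨t, rfl⟩ := Nat.exists_eq_add_of_le' hj
  rw [floor_fract_sum_add_fract_add_fract, h t (by omega), h (t + 1) (by omega)]
  exact ⟨c, rfl⟩

theorem sum_fract_neg (m : ℕ) (hx : ∀ i < m, fract (x i) ≠ 0) :
    ∑ i ∈ range m, fract (-x i) = m - ∑ i ∈ range m, fract (x i) := by
  rw [sum_congr rfl fun i hi => fract_neg (hx i (mem_range.mp hi)), sum_sub_distrib]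
  simp

theorem sum_fract_lt_one_or_sum_fract_neg_lt_one (hn : 2 ≤ n)
    (hx : ∀ i < n + 1, fract (x i) ≠ 0) (h : CondStar x n) (hneg : CondStar (-x) n) :
    ∑ i ∈ range (n + 1), fract (x i) < 1 ∨ ∑ i ∈ range (n + 1), fract (-x i) < 1 := by
  have hsum := sum_fract_neg x (n + 1) hx
  have hn' : (2 : R) ≤ n := by exact_mod_cast hn
  push_cast at hsum
  rcases h.sum_fract_lt_one_or_le with h1 | h1
  · exact Or.inl h1
  · rcases hneg.sum_fract_lt_one_or_le with h2 | h2 <;> simp only [Pi.neg_apply] at h2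
    · exact Or.inr h2
    · linarith

theorem condStar_of_sum_fract_lt_one_or (hx : ∀ i < n + 1, fract (x i) ≠ 0)
    (h : ∑ i ∈ range (n + 1), fract (x i) < 1 ∨ ∑ i ∈ range (n + 1), fract (-x i) < 1) :
    CondStar x n := by
  rcases h with h | h
  · exact condStar_of_carry_succ_eq x 0 (carry_succ_eq_zero_of_sum_fract_lt_one x h)
  · refine condStar_of_carry_succ_eq x 1 (carry_succ_eq_one_of_lt_sum_fract x ?_)
    rw [sum_fract_neg x _ hx] at h
    push_cast at h
    linarith

end FractSum

theorem fract_mul_div_ne_zero {a s : ℤ} {d : ℕ} (ha : 0 < a) (had : a < d) (hs : IsCoprime s d) :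
    fract ((a : ℝ) * s / d) ≠ 0 := by
  rw [Ne, fract_eq_zero_iff]
  rintro ⟨z, hz⟩
  have hd : (d : ℝ) ≠ 0 := Nat.cast_ne_zero.mpr (by omega)
  rw [eq_div_iff hd] at hz
  have hdvd : (d : ℤ) ∣ a * s := ⟨z, by exact_mod_cast (by push_cast; linarith : ((a * s : ℤ) : ℝ) = ((d * z : ℤ) : ℝ))⟩
  exact absurd (Int.le_of_dvd ha (hs.symm.dvd_of_dvd_mul_right hdvd)) (not_le.mpr had)

section RatioSeq

variable {m : ℕ} (d : ℕ) (k : Fin m → ℤ) (s : ℤ)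

noncomputable def ratioSeq (i : ℕ) : ℝ :=
  ((Function.extend Fin.val k 0 i : ℤ) : ℝ) * s / d

theorem ratioSeq_val (i : Fin m) : ratioSeq d k s i = k i * s / d := by
  rw [ratioSeq, Fin.val_injective.extend_apply]

theorem ratioSeq_neg : ratioSeq d k (-s) = -ratioSeq d k s := by
  ext i
  simp only [ratioSeq, Pi.neg_apply, cast_neg]
  ring

theorem sum_comp_ratioSeq (f : ℝ → ℝ) :
    ∑ i : Fin m, f (k i * s / d) = ∑ i ∈ range m, f (ratioSeq d k s i) := by
  rw [← Fin.sum_univ_eq_sum_range (fun i => f (ratioSeq d k s i))]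
  simp only [ratioSeq_val]

theorem cast_sum_castLE_mul_div {j : ℕ} (h : j ≤ m) :
    ((∑ i : Fin j, k (Fin.castLE h i) : ℤ) : ℝ) * s / d = ∑ i ∈ range j, ratioSeq d k s i := by
  rw [← Fin.sum_univ_eq_sum_range, cast_sum, sum_mul, sum_div]
  exact sum_congr rfl fun i _ => (ratioSeq_val d k s (Fin.castLE h i)).symm

end RatioSeq

theorem condStar_iff_condSS (d n : ℕ) (hn : 2 ≤ n)
    (k : Fin (n + 1) → ℤ)
    (hk : ∀ i, 1 ≤ k i ∧ k i ≤ (d : ℤ) - 1) :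
    (∀ s : ℤ, Int.gcd s d = 1 → ∀ j (hj1 : 1 ≤ j) (hj2 : j ≤ n - 1),
        Even ⌊Int.fract (((∑ i : Fin j, k (Fin.castLE (by omega) i) : ℤ) : ℝ) * s / d) +
          Int.fract ((k ⟨j, by omega⟩ : ℝ) * s / d) +
          Int.fract ((k ⟨j + 1, by omega⟩ : ℝ) * s / d)⌋) ↔
    (∀ s : ℤ, Int.gcd s d = 1 →
      (∑ i, Int.fract ((k i : ℝ) * s / d) < 1 ∨
       ∑ i, Int.fract (-((k i : ℝ) * s) / d) < 1)) := by
  have hx : ∀ s : ℤ, Int.gcd s d = 1 → ∀ i < n + 1, fract (ratioSeq d k s i) ≠ 0 :=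
    fun s hs i hi => by
      rw [ratioSeq_val d k s ⟨i, hi⟩]
      exact fract_mul_div_ne_zero (hk _).1 (by linarith [(hk ⟨i, hi⟩).2])
        (Int.isCoprime_iff_gcd_eq_one.mpr hs)
  simp only [neg_div, sum_comp_ratioSeq d k _ fract, sum_comp_ratioSeq d k _ (fun y => fract (-y))]
  simp only [cast_sum_castLE_mul_div, ← ratioSeq_val]
  constructor
  · intro h s hs
    refine sum_fract_lt_one_or_sum_fract_neg_lt_one _ hn (hx s hs) (h s hs) ?_
    rw [← ratioSeq_neg]
    exact h (-s) (by rwa [Int.neg_gcd])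
  · exact fun h s hs => condStar_of_sum_fract_lt_one_or _ (hx s hs) (h s hs)
end
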